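/- arXiv:0908.3750 — 4 statements merged into one kernel-verified Lean document; each statement's English description precedes it below -/
import Mathlib

section
/- Let θ < 0 with α = -1/θ > 0 and define ψ_θ(x) = (1+θx)₊^{-1/θ} on [0,∞). For integer d ≥ 2, ψ_θ is d-monotone on [0,∞) if and only if α ≥ d-1, i.e., if and only if θ ≥ -1/(d-1). -/
open Set MeasureTheory ProbabilityTheory Filter

noncomputable section

/-- `f` is `d`-monotone on `[0,∞)`: continuous on `[0,∞)`, derivatives up to order `d-2`
exist on `(0,∞)` with `(-1)^k f^(k) ≥ 0`, and `(-1)^(d-2) f^(d-2)` is nonincreasing and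
convex on `(0,∞)`. -/
def DMonotoneOn (d : ℕ) (f : ℝ → ℝ) : Prop :=
  ContinuousOn f (Set.Ici 0) ∧
  (∀ k, k + 2 < d → ∀ x ∈ Set.Ioi (0:ℝ), DifferentiableAt ℝ (iteratedDeriv k f) x) ∧
  (∀ k, k + 2 ≤ d → ∀ x ∈ Set.Ioi (0:ℝ), 0 ≤ (-1:ℝ)^k * iteratedDeriv k f x) ∧
  AntitoneOn (fun x => (-1:ℝ)^(d-2) * iteratedDeriv (d-2) f x) (Set.Ioi 0) ∧
  ConvexOn ℝ (Set.Ioi 0) (fun x => (-1:ℝ)^(d-2) * iteratedDeriv (d-2) f x)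


/-! Where `1 + θx > 0` the `k`-th derivative of `(1 + θx)₊^p` is
`p(p-1)⋯(p-k+1) θ^k (1 + θx)^(p-k)`; beyond the root `x₀ = -1/θ` it vanishes; and it is
differentiable at `x₀` as long as the exponent `p - k` exceeds `1`. So if `p ≥ d - 1`, all
derivatives up to order `d - 2` are given on the whole line by this formula: their signs alternate,
and the last signed one is a nonnegative multiple of the convex, nonincreasing `(1 + θx)₊^(p-d+2)`.

If `p < d - 1`, let `j = ⌊p⌋ ≤ d - 2`. For an integer `p = j`, the `j`-th derivative jumps at
`x₀`, which contradicts differentiability (`j < d - 2`) or convexity, since convex functions on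
open sets are continuous (`j = d - 2`). Otherwise, for `j + 2 ≤ d - 2`, the coefficient of order
`j + 2` is negative. For `j = d - 3`, the last signed derivative is a positive multiple of
`(1 + θx)^(p-d+2)` with a negative exponent, so it increases on `(0, x₀)`. For `j = d - 2`, the
exponent lies in `(0, 1)` and the last signed derivative is strictly concave there. -/

open Topology

def truncPow (θ p x : ℝ) : ℝ := max (1 + θ * x) 0 ^ p

lemma neg_one_pow_mul_mul_pow_mul (θ c t : ℝ) (k : ℕ) :
    (-1) ^ k * (c * θ ^ k * t) = c * (-θ) ^ k * t := by
  rw [neg_pow]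
  ring

lemma one_add_mul_pos_of_lt {θ y : ℝ} (hθ : θ < 0) (hy : y < -1 / θ) : 0 < 1 + θ * y := by
  have := (lt_div_iff_of_neg hθ).1 hy
  linarith

lemma one_add_mul_neg_of_gt {θ y : ℝ} (hθ : θ < 0) (hy : -1 / θ < y) : 1 + θ * y < 0 := by
  have := (div_lt_iff_of_neg hθ).1 hy
  linarith

lemma sub_one_div_pos_of_neg {θ u : ℝ} (hθ : θ < 0) (hu : u < 1) : 0 < (u - 1) / θ :=
  div_pos_of_neg_of_neg (by linarith) hθ

lemma hasDerivAt_max_zero_rpow {p t : ℝ} (h : 0 < t ∨ 1 < p) :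
    HasDerivAt (fun t => max t 0 ^ p) (p * max t 0 ^ (p - 1)) t := by
  have hpos : ∀ s, 0 < s → HasDerivAt (fun t => max t 0 ^ p) (p * max s 0 ^ (p - 1)) s := by
    intro s hs
    have hev : (fun t => max t 0 ^ p) =ᶠ[𝓝 s] fun t => t ^ p :=
      (lt_mem_nhds hs).mono fun t ht => by simp only [max_eq_left ht.le]
    rw [max_eq_left hs.le]
    exact (Real.hasDerivAt_rpow_const (Or.inl hs.ne')).congr_of_eventuallyEq hev
  rcases h with ht | hp
  · exact hpos t ht
  refine hasDerivAt_of_hasDerivAt_of_ne' (g := fun t => p * max t 0 ^ (p - 1)) (x := 0)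
    (fun s hs => ?_) ?_ ?_ t
  · rcases hs.lt_or_gt with hs | hs
    · have hev : (fun t => max t 0 ^ p) =ᶠ[𝓝 s] fun _ => 0 :=
        (gt_mem_nhds hs).mono fun t ht => by
          simp only [max_eq_right ht.le, Real.zero_rpow (by positivity : p ≠ 0)]
      simp only [max_eq_right hs.le, Real.zero_rpow (by linarith : p - 1 ≠ 0), mul_zero]
      exact (hasDerivAt_const s 0).congr_of_eventuallyEq hev
    · exact hpos s hs
  · exact ((Real.continuous_rpow_const (by linarith)).comp (by fun_prop)).continuousAt
  · exact (continuous_const.mul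
      ((Real.continuous_rpow_const (by linarith)).comp (by fun_prop))).continuousAt

namespace truncPow

variable {θ p x u : ℝ}

lemma nonneg : 0 ≤ truncPow θ p x := Real.rpow_nonneg (le_max_right _ _) _

lemma eq_rpow (hx : 0 < 1 + θ * x) : truncPow θ p x = (1 + θ * x) ^ p := by
  rw [truncPow, max_eq_left hx.le]

lemma continuous (hp : 0 ≤ p) : Continuous (truncPow θ p) :=
  (Real.continuous_rpow_const hp).comp (by fun_prop)

lemma antitone (hθ : θ ≤ 0) (hp : 0 ≤ p) : Antitone (truncPow θ p) := fun x y hxy =>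
  Real.rpow_le_rpow (le_max_right _ _) (max_le_max (by nlinarith) le_rfl) hp

lemma convexOn (hp : 1 ≤ p) : ConvexOn ℝ univ (truncPow θ p) := by
  refine ⟨convex_univ, fun x _ y _ a b ha hb hab => ?_⟩
  have hsplit : 1 + θ * (a * x + b * y) = a * (1 + θ * x) + b * (1 + θ * y) := by
    linear_combination -hab
  calc truncPow θ p (a • x + b • y)
      ≤ (a * max (1 + θ * x) 0 + b * max (1 + θ * y) 0) ^ p := by
        refine Real.rpow_le_rpow (le_max_right _ _) (max_le ?_ (by positivity)) (by linarith)
        rw [smul_eq_mul, smul_eq_mul, hsplit]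
        gcongr <;> exact le_max_left _ _
    _ ≤ a • truncPow θ p x + b • truncPow θ p y :=
        (convexOn_rpow hp).2 (mem_Ici.2 (le_max_right _ _)) (mem_Ici.2 (le_max_right _ _))
          ha hb hab

lemma hasDerivAt (h : 0 < 1 + θ * x ∨ 1 < p) :
    HasDerivAt (truncPow θ p) (p * θ * truncPow θ (p - 1) x) x := by
  have hlin : HasDerivAt (fun y => 1 + θ * y) θ x := by
    simpa using ((hasDerivAt_id x).const_mul θ).const_add 1
  refine ((hasDerivAt_max_zero_rpow h).comp x hlin).congr_deriv ?_
  unfold truncPow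
  ring

lemma hasDerivAt_descPochhammer_mul {k : ℕ} (h : 0 < 1 + θ * x ∨ (k : ℝ) + 1 < p) :
    HasDerivAt (fun y => (descPochhammer ℝ k).eval p * θ ^ k * truncPow θ (p - k) y)
      ((descPochhammer ℝ (k + 1)).eval p * θ ^ (k + 1) * truncPow θ (p - (k + 1 : ℕ)) x) x := by
  have h' : 0 < 1 + θ * x ∨ 1 < p - k := h.imp_right fun h => by linarith
  refine ((hasDerivAt h').const_mul ((descPochhammer ℝ k).eval p * θ ^ k)).congr_deriv ?_
  rw [descPochhammer_succ_eval, Nat.cast_succ, sub_add_eq_sub_sub]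
  ring

lemma iteratedDeriv_of_pos (k : ℕ) (hx : 0 < 1 + θ * x) :
    iteratedDeriv k (truncPow θ p) x =
      (descPochhammer ℝ k).eval p * θ ^ k * truncPow θ (p - k) x := by
  induction k generalizing x with
  | zero => simp
  | succ k ih =>
    have hU : {y | 0 < 1 + θ * y} ∈ 𝓝 x :=
      (isOpen_lt continuous_const (by fun_prop)).mem_nhds hx
    have hev : iteratedDeriv k (truncPow θ p) =ᶠ[𝓝 x]
        fun y => (descPochhammer ℝ k).eval p * θ ^ k * truncPow θ (p - k) y :=
      eventually_of_mem hU fun y hy => ih hy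
    rw [iteratedDeriv_succ, hev.deriv_eq]
    exact (hasDerivAt_descPochhammer_mul (Or.inl hx)).deriv

lemma iteratedDeriv_eq {k : ℕ} (hk : (k : ℝ) < p) :
    iteratedDeriv k (truncPow θ p) =
      fun x => (descPochhammer ℝ k).eval p * θ ^ k * truncPow θ (p - k) x := by
  induction k with
  | zero => simp
  | succ k ih =>
    push_cast at hk
    rw [iteratedDeriv_succ, ih (by linarith)]
    exact funext fun x => (hasDerivAt_descPochhammer_mul (Or.inr hk)).deriv

lemma iteratedDeriv_of_neg (hp : p ≠ 0) (k : ℕ) (hx : 1 + θ * x < 0) :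
    iteratedDeriv k (truncPow θ p) x = 0 := by
  have hU : {y | 1 + θ * y < 0} ∈ 𝓝 x := (isOpen_lt (by fun_prop) continuous_const).mem_nhds hx
  have hev : truncPow θ p =ᶠ[𝓝 x] fun _ => 0 :=
    eventually_of_mem hU fun y (hy : 1 + θ * y < 0) => by
      simp only [truncPow, max_eq_right hy.le, Real.zero_rpow hp]
  rw [hev.iteratedDeriv_eq, iteratedDeriv_const]
  split_ifs <;> rfl

-- `(u - 1) / θ` is the point where `1 + θ x = u`.
lemma neg_one_pow_mul_iteratedDeriv_sub_one_div (hθ : θ ≠ 0) (hu : 0 < u) (k : ℕ) :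
    (-1) ^ k * iteratedDeriv k (truncPow θ p) ((u - 1) / θ) =
      (descPochhammer ℝ k).eval p * (-θ) ^ k * u ^ (p - k) := by
  have hx : 1 + θ * ((u - 1) / θ) = u := by field_simp; ring
  have hpos : 0 < 1 + θ * ((u - 1) / θ) := by rwa [hx]
  rw [iteratedDeriv_of_pos k hpos, neg_one_pow_mul_mul_pow_mul, eq_rpow hpos, hx]

lemma not_continuousAt_iteratedDeriv_natCast (hθ : θ < 0) {j : ℕ} (hj : j ≠ 0) :
    ¬ ContinuousAt (iteratedDeriv j (truncPow θ j)) (-1 / θ) := by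
  intro hc
  have hleft : iteratedDeriv j (truncPow θ j) =ᶠ[𝓝[<] (-1 / θ)]
      fun _ => (descPochhammer ℝ j).eval (j : ℝ) * θ ^ j :=
    eventually_nhdsWithin_of_forall fun y (hy : y < -1 / θ) => by
      rw [iteratedDeriv_of_pos j (one_add_mul_pos_of_lt hθ hy), sub_self, truncPow,
        Real.rpow_zero, mul_one]
  have hright : iteratedDeriv j (truncPow θ j) =ᶠ[𝓝[>] (-1 / θ)] fun _ => 0 :=
    eventually_nhdsWithin_of_forall fun y (hy : -1 / θ < y) =>
      iteratedDeriv_of_neg (Nat.cast_ne_zero.2 hj) j (one_add_mul_neg_of_gt hθ hy)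
  have h_eq_left := tendsto_nhds_unique (hc.tendsto.mono_left nhdsWithin_le_nhds)
    (tendsto_const_nhds.congr' hleft.symm)
  have h_eq_right := tendsto_nhds_unique (hc.tendsto.mono_left nhdsWithin_le_nhds)
    (tendsto_const_nhds.congr' hright.symm)
  exact mul_ne_zero (descPochhammer_pos (by linarith)).ne' (pow_ne_zero j hθ.ne)
    (h_eq_left.symm.trans h_eq_right)

lemma not_convexOn_neg_one_pow_mul_iteratedDeriv_natCast (hθ : θ < 0) {j : ℕ} (hj : j ≠ 0) :
    ¬ ConvexOn ℝ (Ioi 0) fun x => (-1) ^ j * iteratedDeriv j (truncPow θ j) x := by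
  intro hconv
  apply not_continuousAt_iteratedDeriv_natCast hθ hj
  have hx₀ : Ioi (0 : ℝ) ∈ 𝓝 (-1 / θ) :=
    isOpen_Ioi.mem_nhds (div_pos_of_neg_of_neg (by norm_num) hθ)
  convert ((hconv.continuousOn isOpen_Ioi).continuousAt hx₀).const_mul ((-1) ^ j) using 1
  funext x
  rw [← mul_assoc, ← mul_pow]
  norm_num

lemma not_forall_neg_one_pow_mul_iteratedDeriv_nonneg (hθ : θ < 0) {j : ℕ} (h₁ : (j : ℝ) < p)
    (h₂ : p < j + 1) :
    ¬ ∀ x ∈ Ioi 0, 0 ≤ (-1) ^ (j + 2) * iteratedDeriv (j + 2) (truncPow θ p) x := by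
  intro h
  have hx := h _ (sub_one_div_pos_of_neg hθ (by norm_num : (1 / 2 : ℝ) < 1))
  rw [neg_one_pow_mul_iteratedDeriv_sub_one_div hθ.ne (by norm_num)] at hx
  have hc : (descPochhammer ℝ (j + 2)).eval p < 0 := by
    rw [descPochhammer_succ_eval]
    exact mul_neg_of_pos_of_neg (descPochhammer_pos (by push_cast; linarith))
      (by push_cast; linarith)
  refine hx.not_gt (mul_neg_of_neg_of_pos (mul_neg_of_neg_of_pos hc ?_) ?_)
  · exact pow_pos (neg_pos.2 hθ) _
  · exact Real.rpow_pos_of_pos (by norm_num) _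

lemma not_antitoneOn_neg_one_pow_mul_iteratedDeriv (hθ : θ < 0) {m : ℕ} (h₁ : (m : ℝ) - 1 < p)
    (h₂ : p < m) :
    ¬ AntitoneOn (fun x => (-1) ^ m * iteratedDeriv m (truncPow θ p) x) (Ioi 0) := by
  intro h
  have hx := h (sub_one_div_pos_of_neg hθ (by norm_num : (3 / 4 : ℝ) < 1))
    (sub_one_div_pos_of_neg hθ (by norm_num : (1 / 2 : ℝ) < 1))
    (div_le_div_of_nonpos_of_le hθ.le (by norm_num))
  simp only [neg_one_pow_mul_iteratedDeriv_sub_one_div hθ.ne (by norm_num : (0 : ℝ) < 3 / 4),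
    neg_one_pow_mul_iteratedDeriv_sub_one_div hθ.ne (by norm_num : (0 : ℝ) < 1 / 2)] at hx
  have hK : 0 < (descPochhammer ℝ m).eval p * (-θ) ^ m :=
    mul_pos (descPochhammer_pos h₁) (pow_pos (neg_pos.2 hθ) m)
  have hr : (3 / 4 : ℝ) ^ (p - m) < (1 / 2) ^ (p - m) :=
    Real.rpow_lt_rpow_of_neg (by norm_num) (by norm_num) (by linarith)
  exact hx.not_gt (mul_lt_mul_of_pos_left hr hK)

lemma not_convexOn_neg_one_pow_mul_iteratedDeriv (hθ : θ < 0) {m : ℕ} (h₁ : (m : ℝ) < p)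
    (h₂ : p < m + 1) :
    ¬ ConvexOn ℝ (Ioi 0) fun x => (-1) ^ m * iteratedDeriv m (truncPow θ p) x := by
  intro h
  have hx := h.2 (sub_one_div_pos_of_neg hθ (by norm_num : (3 / 4 : ℝ) < 1))
    (sub_one_div_pos_of_neg hθ (by norm_num : (1 / 2 : ℝ) < 1)) (by norm_num : (0 : ℝ) ≤ 1 / 2)
    (by norm_num : (0 : ℝ) ≤ 1 / 2) (by norm_num)
  simp only [smul_eq_mul] at hx
  rw [show 1 / 2 * ((3 / 4 - 1) / θ) + 1 / 2 * ((1 / 2 - 1) / θ) = (5 / 8 - 1) / θ by ring] at hx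
  simp only [neg_one_pow_mul_iteratedDeriv_sub_one_div hθ.ne (by norm_num : (0 : ℝ) < 3 / 4),
    neg_one_pow_mul_iteratedDeriv_sub_one_div hθ.ne (by norm_num : (0 : ℝ) < 1 / 2),
    neg_one_pow_mul_iteratedDeriv_sub_one_div hθ.ne (by norm_num : (0 : ℝ) < 5 / 8)] at hx
  have hK : 0 < (descPochhammer ℝ m).eval p * (-θ) ^ m :=
    mul_pos (descPochhammer_pos (by linarith)) (pow_pos (neg_pos.2 hθ) m)
  have hconc := (Real.strictConcaveOn_rpow (p := p - m) (by linarith) (by linarith)).2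
    (mem_Ici.2 (by norm_num : (0 : ℝ) ≤ 3 / 4)) (mem_Ici.2 (by norm_num : (0 : ℝ) ≤ 1 / 2))
    (by norm_num) (by norm_num : (0 : ℝ) < 1 / 2) (by norm_num : (0 : ℝ) < 1 / 2) (by norm_num)
  simp only [smul_eq_mul] at hconc
  norm_num at hconc
  linarith [mul_lt_mul_of_pos_left hconc hK]

end truncPow

open truncPow

theorem dMonotoneOn_truncPow {θ p : ℝ} {d : ℕ} (hθ : θ ≤ 0) (hd : 2 ≤ d)
    (hp : (d : ℝ) - 1 ≤ p) : DMonotoneOn d (truncPow θ p) := by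
  have hlt : ∀ k, k + 2 ≤ d → (k : ℝ) < p := fun k hk => by
    have : (k : ℝ) + 2 ≤ d := by exact_mod_cast hk
    linarith
  have hcoeff : ∀ k, k + 2 ≤ d → 0 ≤ (descPochhammer ℝ k).eval p * (-θ) ^ k := fun k hk =>
    mul_nonneg (descPochhammer_nonneg (by linarith [hlt k hk])) (pow_nonneg (neg_nonneg.2 hθ) k)
  have hsigned : ∀ k, k + 2 ≤ d → (fun x => (-1) ^ k * iteratedDeriv k (truncPow θ p) x) =
      fun x => (descPochhammer ℝ k).eval p * (-θ) ^ k * truncPow θ (p - k) x := fun k hk => by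
    rw [iteratedDeriv_eq (hlt k hk)]
    exact funext fun x => neg_one_pow_mul_mul_pow_mul θ _ _ k
  have hexp : 1 ≤ p - ((d - 2 : ℕ) : ℝ) := by
    rw [Nat.cast_sub hd]
    push_cast
    linarith
  refine ⟨(continuous (by linarith)).continuousOn, fun k hk x _ => ?_, fun k hk x _ => ?_, ?_, ?_⟩
  · have hk' : (k : ℝ) + 1 < p := by exact_mod_cast hlt (k + 1) (by omega)
    rw [iteratedDeriv_eq (hlt k hk.le)]
    exact (hasDerivAt_descPochhammer_mul (Or.inr hk')).differentiableAt
  · rw [congrFun (hsigned k hk) x]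
    exact mul_nonneg (hcoeff k hk) nonneg
  · rw [hsigned (d - 2) (by omega)]
    exact ((antitone hθ (by linarith)).const_mul (hcoeff _ (by omega))).antitoneOn _
  · rw [hsigned (d - 2) (by omega)]
    exact ((convexOn hexp).smul (hcoeff _ (by omega))).subset (subset_univ _) (convex_Ioi 0)

theorem le_of_dMonotoneOn_truncPow {θ p : ℝ} {d : ℕ} (hθ : θ < 0) (hp : 0 < p)
    (h : DMonotoneOn d (truncPow θ p)) : (d : ℝ) - 1 ≤ p := by
  obtain ⟨-, hdiff, hsign, hanti, hconv⟩ := h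
  by_contra! hlt
  obtain ⟨m, rfl⟩ : ∃ m, d = m + 2 := ⟨d - 2, by
    have : (1 : ℝ) < d := by linarith
    have : 1 < d := by exact_mod_cast this
    omega⟩
  rw [Nat.add_sub_cancel] at hanti hconv
  push_cast at hlt
  obtain ⟨j, hjp, hpj⟩ : ∃ j : ℕ, (j : ℝ) ≤ p ∧ p < j + 1 :=
    ⟨⌊p⌋₊, Nat.floor_le hp.le, Nat.lt_floor_add_one p⟩
  have hjm : j ≤ m := by
    have : (j : ℝ) < m + 1 := by linarith
    exact Nat.lt_succ_iff.1 (by exact_mod_cast this)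
  rcases hjp.lt_or_eq with hjp | rfl
  · rcases (by omega : j + 2 ≤ m ∨ j + 1 = m ∨ j = m) with hjm | rfl | rfl
    · exact not_forall_neg_one_pow_mul_iteratedDeriv_nonneg hθ hjp hpj
        fun x hx => hsign (j + 2) (by omega) x hx
    · exact not_antitoneOn_neg_one_pow_mul_iteratedDeriv hθ (by push_cast; linarith)
        (by push_cast; linarith) hanti
    · exact not_convexOn_neg_one_pow_mul_iteratedDeriv hθ hjp hpj hconv
  · have hj : j ≠ 0 := by rintro rfl; simp at hp
    rcases hjm.lt_or_eq with hjm | rfl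
    · exact not_continuousAt_iteratedDeriv_natCast hθ hj
        (hdiff j (by omega) _ (div_pos_of_neg_of_neg (by norm_num) hθ)).continuousAt
    · exact not_convexOn_neg_one_pow_mul_iteratedDeriv_natCast hθ hj hconv

/-- The Clayton generator `ψ_θ(x) = (1 + θx)₊^(-1/θ)` with `θ < 0` is `d`-monotone on
`[0,∞)` if and only if `α = -1/θ ≥ d - 1`, i.e. iff `θ ≥ -1/(d-1)`. -/
theorem stmt3 (θ : ℝ) (hθ : θ < 0) (d : ℕ) (hd : 2 ≤ d) :
    (DMonotoneOn d (fun x : ℝ => max (1 + θ * x) 0 ^ (-1/θ)) ↔ (d : ℝ) - 1 ≤ -1/θ) ∧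
    ((d : ℝ) - 1 ≤ -1/θ ↔ -(1:ℝ)/((d:ℝ) - 1) ≤ θ) := by
  have hα : 0 < -1 / θ := div_pos_of_neg_of_neg (by norm_num) hθ
  have hd₁ : (0 : ℝ) < d - 1 := by
    have : (2 : ℝ) ≤ d := by exact_mod_cast hd
    linarith
  refine ⟨⟨le_of_dMonotoneOn_truncPow hθ hα, dMonotoneOn_truncPow hθ.le hd⟩, ?_⟩
  rw [le_div_iff_of_neg hθ, div_le_iff₀ hd₁, mul_comm]
end
end

section
/- Let X be a nonnegative random variable with distribution function F, and let d ≥ 2 be an integer. Define the Williamson d-transform f(x) = E[(1 - x/X)₊^{d-1}] for x > 0 and f(0) = 1 - F(0). Then f is d-monotone on [0,∞), lim_{x→∞} f(x) = 0, and f(0) ∈ [0,1]. -/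
/-!
For `x ≥ 0` the integrand equals `(X - x)₊^(d-1) / X^(d-1)`, so `f` is
`x ↦ E[(X - x)₊^m / X^n]` with `m = n = d - 1`. Differentiating under the integral only lowers
the exponent `m` (the denominator does not depend on `x`), so on `(0, ∞)`
`(-1)^k f^(k) = (d-1)⋯(d-k) E[(X - x)₊^(d-1-k) / X^(d-1)]`: it is nonnegative, and for
`k = d - 2` the integrand `(X - x)₊ / X^(d-1)` is nonincreasing and convex in `x`. Continuity and
the limit at `∞` follow by dominated convergence, the integrand for `m = n` being bounded by `1`.
-/

open Set MeasureTheory ProbabilityTheory Filter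

noncomputable section

open Topology

section Kernel

variable {m n : ℕ} {t x : ℝ}

theorem hasDerivAt_max_zero_pow (hm : 2 ≤ m) (y : ℝ) :
    HasDerivAt (fun y : ℝ => max y 0 ^ m) (m * max y 0 ^ (m - 1)) y := by
  have hm0 : m ≠ 0 := by omega
  have hm1 : m - 1 ≠ 0 := by omega
  rcases lt_trichotomy y 0 with hy | rfl | hy
  · have hzero : (fun y : ℝ => max y 0 ^ m) =ᶠ[𝓝 y] fun _ => 0 := by
      filter_upwards [Iio_mem_nhds hy] with z hz
      simp [max_eq_right (mem_Iio.1 hz).le, hm0]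
    simpa [max_eq_right hy.le, hm1] using (hasDerivAt_const y (0 : ℝ)).congr_of_eventuallyEq hzero
  · have hleft : HasDerivWithinAt (fun y : ℝ => max y 0 ^ m) 0 (Iic 0) 0 :=
      (hasDerivWithinAt_const _ _ 0).congr (fun z hz => by simp [max_eq_right (mem_Iic.1 hz), hm0])
        (by simp [hm0])
    have hright : HasDerivWithinAt (fun y : ℝ => max y 0 ^ m) 0 (Ici 0) 0 := by
      simpa [hm1] using (hasDerivAt_pow m (0 : ℝ)).hasDerivWithinAt.congr
        (fun z hz => by simp [max_eq_left (mem_Ici.1 hz)]) (by simp)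
    simpa [hm1, hasDerivWithinAt_univ] using hleft.union hright
  · have hpow : (fun y : ℝ => max y 0 ^ m) =ᶠ[𝓝 y] fun z => z ^ m := by
      filter_upwards [Ioi_mem_nhds hy] with z hz
      rw [max_eq_left hz.le]
    simpa [max_eq_left hy.le] using (hasDerivAt_pow m y).congr_of_eventuallyEq hpow

theorem hasDerivAt_max_sub_zero_pow_div (hm : 2 ≤ m) (t x : ℝ) :
    HasDerivAt (fun x => max (t - x) 0 ^ m / t ^ n)
      (-m * (max (t - x) 0 ^ (m - 1) / t ^ n)) x := by
  have h := ((hasDerivAt_max_zero_pow hm (t - x)).comp x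
    ((hasDerivAt_id x).const_sub t)).div_const (t ^ n)
  rwa [mul_neg_one, ← neg_mul, mul_div_assoc] at h

theorem max_sub_zero_div_mem_Icc (hx : 0 ≤ x) : max (t - x) 0 / t ∈ Icc 0 1 := by
  rcases le_or_gt t x with htx | htx
  · simp [max_eq_right (sub_nonpos.2 htx)]
  · have ht : 0 < t := hx.trans_lt htx
    rw [max_eq_left (sub_nonneg.2 htx.le)]
    exact ⟨div_nonneg (sub_nonneg.2 htx.le) ht.le, (div_le_one ht).2 (by linarith)⟩

theorem max_sub_zero_pow_div_pow_le_one (hx : 0 ≤ x) : max (t - x) 0 ^ n / t ^ n ≤ 1 := by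
  obtain ⟨h0, h1⟩ := max_sub_zero_div_mem_Icc (t := t) hx
  rw [← div_pow]
  exact pow_le_one₀ h0 h1

theorem max_sub_zero_pow_div_pow_le_inv_pow (hm : 1 ≤ m) (hmn : m ≤ n) (hx : 0 < x) :
    max (t - x) 0 ^ m / t ^ n ≤ (x ^ (n - m))⁻¹ := by
  rcases le_or_gt t x with htx | htx
  · rw [max_eq_right (sub_nonpos.2 htx), zero_pow (by omega), zero_div]
    positivity
  · obtain ⟨h0, h1⟩ := max_sub_zero_div_mem_Icc (t := t) hx.le
    have ht : 0 < t := hx.trans htx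
    calc max (t - x) 0 ^ m / t ^ n = (max (t - x) 0 / t) ^ m * (t ^ (n - m))⁻¹ := by
          conv_lhs => rw [← Nat.sub_add_cancel hmn, pow_add]
          rw [div_pow]
          field_simp
      _ ≤ 1 * (x ^ (n - m))⁻¹ := by
          gcongr
          exact pow_le_one₀ h0 h1
      _ = (x ^ (n - m))⁻¹ := one_mul _

theorem max_sub_zero_pow_div_pow_nonneg (ht : 0 ≤ t) : 0 ≤ max (t - x) 0 ^ m / t ^ n := by
  positivity

end Kernel

section TruncMoment

variable {Ω : Type*} [MeasurableSpace Ω] {μ : Measure Ω} {X : Ω → ℝ} {m n : ℕ} {x : ℝ}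

variable (μ X) in
def truncMoment (n m : ℕ) (x : ℝ) : ℝ := ∫ ω, max (X ω - x) 0 ^ m / X ω ^ n ∂μ

theorem aestronglyMeasurable_truncMoment_integrand (hX : Measurable X) (n m : ℕ) (x : ℝ) :
    AEStronglyMeasurable (fun ω => max (X ω - x) 0 ^ m / X ω ^ n) μ :=
  (((hX.sub_const x).max measurable_const).pow_const m |>.div
    (hX.pow_const n)).aestronglyMeasurable

theorem integrable_truncMoment_integrand [IsFiniteMeasure μ] (hX : Measurable X)
    (hX0 : ∀ ω, 0 ≤ X ω) (hm : 1 ≤ m) (hmn : m ≤ n) (hx : 0 < x) :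
    Integrable (fun ω => max (X ω - x) 0 ^ m / X ω ^ n) μ :=
  (integrable_const (x ^ (n - m))⁻¹).mono' (aestronglyMeasurable_truncMoment_integrand hX n m x)
    (ae_of_all _ fun ω => by
      rw [Real.norm_of_nonneg (max_sub_zero_pow_div_pow_nonneg (hX0 ω))]
      exact max_sub_zero_pow_div_pow_le_inv_pow hm hmn hx)

theorem hasDerivAt_truncMoment [IsFiniteMeasure μ] (hX : Measurable X) (hX0 : ∀ ω, 0 ≤ X ω)
    (hm : 2 ≤ m) (hmn : m ≤ n) (hx : 0 < x) :
    HasDerivAt (truncMoment μ X n m) (-m * truncMoment μ X n (m - 1) x) x := by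
  have hbound (y : ℝ) (hy : y ∈ Ioi (x / 2)) (t : ℝ) (ht : 0 ≤ t) :
      ‖-m * (max (t - y) 0 ^ (m - 1) / t ^ n)‖ ≤ m * ((x / 2) ^ (n - (m - 1)))⁻¹ := by
    have hy0 : 0 < y := (half_pos hx).trans hy
    rw [norm_mul, norm_neg, Real.norm_natCast,
      Real.norm_of_nonneg (max_sub_zero_pow_div_pow_nonneg ht)]
    gcongr
    calc max (t - y) 0 ^ (m - 1) / t ^ n ≤ (y ^ (n - (m - 1)))⁻¹ :=
          max_sub_zero_pow_div_pow_le_inv_pow (by omega) (by omega) hy0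
      _ ≤ ((x / 2) ^ (n - (m - 1)))⁻¹ := by gcongr; exact le_of_lt hy
  obtain ⟨-, h⟩ := hasDerivAt_integral_of_dominated_loc_of_deriv_le (μ := μ)
    (F := fun y ω => max (X ω - y) 0 ^ m / X ω ^ n)
    (Ioi_mem_nhds (half_lt_self hx))
    (Eventually.of_forall fun y => aestronglyMeasurable_truncMoment_integrand hX n m y)
    (integrable_truncMoment_integrand hX hX0 (by omega) hmn hx)
    ((aestronglyMeasurable_truncMoment_integrand hX n (m - 1) x).const_mul _)
    (ae_of_all _ fun ω y hy => hbound y hy (X ω) (hX0 ω)) (integrable_const _)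
    (ae_of_all _ fun ω y _ => hasDerivAt_max_sub_zero_pow_div hm (X ω) y)
  rw [integral_const_mul] at h
  exact h

theorem truncMoment_nonneg (hX0 : ∀ ω, 0 ≤ X ω) : 0 ≤ truncMoment μ X n m x :=
  integral_nonneg fun ω => max_sub_zero_pow_div_pow_nonneg (hX0 ω)

theorem iteratedDeriv_eqOn_truncMoment [IsFiniteMeasure μ] (hX : Measurable X)
    (hX0 : ∀ ω, 0 ≤ X ω) {f : ℝ → ℝ} (hf : EqOn f (truncMoment μ X n n) (Ioi 0)) {k : ℕ}
    (hk : k < n) :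
    EqOn (iteratedDeriv k f)
      (fun x => (-1 : ℝ) ^ k * n.descFactorial k * truncMoment μ X n (n - k) x) (Ioi 0) := by
  induction k with
  | zero => simpa using hf
  | succ k ih =>
    intro x hx
    have hD := (hasDerivAt_truncMoment (μ := μ) (m := n - k) (n := n) hX hX0 (by omega)
      (by omega) hx).const_mul ((-1 : ℝ) ^ k * n.descFactorial k)
    rw [iteratedDeriv_succ, ((ih (by omega)).eventuallyEq_of_mem (Ioi_mem_nhds hx)).deriv_eq,
      hD.deriv, Nat.descFactorial_succ, show n - k - 1 = n - (k + 1) by omega]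
    push_cast
    ring

theorem continuousOn_truncMoment_self [IsFiniteMeasure μ] (hX : Measurable X)
    (hX0 : ∀ ω, 0 ≤ X ω) : ContinuousOn (truncMoment μ X n n) (Ici 0) :=
  continuousOn_of_dominated (bound := fun _ => 1)
    (fun x _ => aestronglyMeasurable_truncMoment_integrand hX n n x)
    (fun x hx => ae_of_all _ fun ω => by
      rw [Real.norm_of_nonneg (max_sub_zero_pow_div_pow_nonneg (hX0 ω))]
      exact max_sub_zero_pow_div_pow_le_one hx)
    (integrable_const 1) (ae_of_all _ fun ω => by fun_prop)

theorem tendsto_truncMoment_self_atTop [IsFiniteMeasure μ] (hX : Measurable X)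
    (hX0 : ∀ ω, 0 ≤ X ω) (hn : 1 ≤ n) : Tendsto (truncMoment μ X n n) atTop (𝓝 0) := by
  have hlim (ω : Ω) : Tendsto (fun x => max (X ω - x) 0 ^ n / X ω ^ n) atTop (𝓝 0) :=
    tendsto_const_nhds.congr' <| by
      filter_upwards [eventually_ge_atTop (X ω)] with x hx
      simp [max_eq_right (sub_nonpos.2 hx), zero_pow (by omega : n ≠ 0)]
  have h := tendsto_integral_filter_of_dominated_convergence (μ := μ) (bound := fun _ => 1)
    (Eventually.of_forall fun x => aestronglyMeasurable_truncMoment_integrand hX n n x)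
    ((eventually_ge_atTop 0).mono fun x hx => ae_of_all _ fun ω => by
      rw [Real.norm_of_nonneg (max_sub_zero_pow_div_pow_nonneg (hX0 ω))]
      exact max_sub_zero_pow_div_pow_le_one hx)
    (integrable_const 1) (ae_of_all _ hlim)
  rw [integral_zero] at h
  exact h

theorem antitoneOn_truncMoment_one [IsFiniteMeasure μ] (hX : Measurable X)
    (hX0 : ∀ ω, 0 ≤ X ω) (hn : 1 ≤ n) : AntitoneOn (truncMoment μ X n 1) (Ioi 0) :=
  integral_antitoneOn_of_integrand_ae
    (ae_of_all _ fun ω a _ b _ hab => by have := hX0 ω; dsimp only; gcongr)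
    (fun _ hx => integrable_truncMoment_integrand hX hX0 le_rfl hn hx)

theorem convexOn_truncMoment_one [IsFiniteMeasure μ] (hX : Measurable X)
    (hX0 : ∀ ω, 0 ≤ X ω) (hn : 1 ≤ n) : ConvexOn ℝ (Ioi 0) (truncMoment μ X n 1) := by
  refine integral_convexOn_of_integrand_ae (convex_Ioi 0) (ae_of_all _ fun ω => ?_)
    (fun _ hx => integrable_truncMoment_integrand hX hX0 le_rfl hn hx)
  have hmax : ConvexOn ℝ (Ioi 0) (fun x : ℝ => max (X ω - x) 0) :=
    ((convexOn_const _ (convex_Ioi 0)).sub (concaveOn_id (convex_Ioi 0))).sup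
      (convexOn_const 0 (convex_Ioi 0))
  simpa only [smul_eq_mul, pow_one, div_eq_inv_mul] using
    hmax.smul (inv_nonneg.2 (pow_nonneg (hX0 ω) n))

theorem dMonotoneOn_of_eqOn_truncMoment [IsFiniteMeasure μ] (hX : Measurable X)
    (hX0 : ∀ ω, 0 ≤ X ω) {d : ℕ} (hd : 2 ≤ d) {f : ℝ → ℝ}
    (hf : EqOn f (truncMoment μ X (d - 1) (d - 1)) (Ici 0)) : DMonotoneOn d f := by
  have hderiv {k : ℕ} (hk : k < d - 1) :=
    iteratedDeriv_eqOn_truncMoment hX hX0 (hf.mono Ioi_subset_Ici_self) hk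
  have hsign {k : ℕ} (hk : k < d - 1) : EqOn (fun x => (-1 : ℝ) ^ k * iteratedDeriv k f x)
      (fun x => (d - 1).descFactorial k * truncMoment μ X (d - 1) (d - 1 - k) x) (Ioi 0) := by
    intro x hx
    have hsq : ((-1 : ℝ) ^ k) * (-1) ^ k = 1 := by rw [← mul_pow]; norm_num
    simp only [hderiv hk hx]
    linear_combination ((d - 1).descFactorial k * truncMoment μ X (d - 1) (d - 1 - k) x) * hsq
  have hc : (0 : ℝ) ≤ (d - 1).descFactorial (d - 2) := Nat.cast_nonneg _
  have hlast := hsign (k := d - 2) (by omega)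
  rw [show d - 1 - (d - 2) = 1 by omega] at hlast
  refine ⟨(continuousOn_truncMoment_self hX hX0).congr hf, fun k hk x hx => ?_,
    fun k hk x hx => ?_, ?_, ?_⟩
  · have hD := hasDerivAt_truncMoment (μ := μ) (m := d - 1 - k) (n := d - 1) hX hX0
      (by omega) (by omega) hx
    exact (hD.differentiableAt.const_mul _).congr_of_eventuallyEq
      ((hderiv (k := k) (by omega)).eventuallyEq_of_mem (Ioi_mem_nhds hx))
  · have h := hsign (k := k) (by omega) hx
    dsimp only at h
    rw [h]
    exact mul_nonneg (Nat.cast_nonneg _) (truncMoment_nonneg hX0)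
  · refine AntitoneOn.congr (fun a ha b hb hab => ?_) hlast.symm
    exact mul_le_mul_of_nonneg_left (antitoneOn_truncMoment_one hX hX0 (by omega) ha hb hab) hc
  · exact ((convexOn_truncMoment_one hX hX0 (by omega)).smul hc).congr hlast.symm

end TruncMoment

theorem ite_lt_one_sub_div_pow_eq {n : ℕ} (hn : n ≠ 0) {x t : ℝ} (hx : 0 ≤ x) :
    (if x < t then (1 - x / t) ^ n else 0) = max (t - x) 0 ^ n / t ^ n := by
  split_ifs with hxt
  · have ht : t ≠ 0 := (hx.trans_lt hxt).ne'
    rw [max_eq_left (sub_nonneg.2 hxt.le), ← div_pow, sub_div, div_self ht]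
  · rw [max_eq_right (by linarith), zero_pow hn, zero_div]

theorem integral_ite_pos_one {Ω : Type*} [MeasurableSpace Ω] {μ : Measure Ω}
    [IsProbabilityMeasure μ] {X : Ω → ℝ} (hX : Measurable X) :
    ∫ ω, (if 0 < X ω then 1 else 0 : ℝ) ∂μ = 1 - μ.real {ω | X ω ≤ 0} := by
  have hS : MeasurableSet {ω | X ω ≤ 0} := hX measurableSet_Iic
  rw [← probReal_compl_eq_one_sub hS, ← integral_indicator_one hS.compl]
  congr with ω
  simp [indicator_apply]

/-- The Williamson `d`-transform `f(x) = E[(1 - x/X)₊^(d-1) 1{X > x}]` of a nonnegative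
random variable `X` is `d`-monotone on `[0,∞)`, tends to `0` at `∞`, and satisfies
`f 0 = 1 - F 0 ∈ [0,1]`. -/
theorem stmt6 {Ω : Type*} [MeasurableSpace Ω] (μ : Measure Ω) [IsProbabilityMeasure μ]
    (X : Ω → ℝ) (hX : Measurable X) (hX0 : ∀ ω, 0 ≤ X ω) (d : ℕ) (hd : 2 ≤ d)
    (f : ℝ → ℝ)
    (hf : ∀ x : ℝ, f x = ∫ ω, (if x < X ω then (1 - x / X ω) ^ (d - 1) else 0) ∂μ) :
    DMonotoneOn d f ∧ Filter.Tendsto f Filter.atTop (nhds 0) ∧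
      f 0 = 1 - (μ {ω | X ω ≤ 0}).toReal ∧ f 0 ∈ Set.Icc (0:ℝ) 1 := by
  have hfF : EqOn f (truncMoment μ X (d - 1) (d - 1)) (Ici 0) := fun x hx => by
    rw [hf x]
    exact integral_congr_ae (ae_of_all _ fun ω => ite_lt_one_sub_div_pow_eq (by omega) hx)
  have hf0 : f 0 = 1 - μ.real {ω | X ω ≤ 0} := by
    simpa [hf 0] using integral_ite_pos_one (μ := μ) hX
  refine ⟨dMonotoneOn_of_eqOn_truncMoment hX hX0 hd hfF, ?_, hf0, ?_⟩
  · exact (tendsto_truncMoment_self_atTop hX hX0 (by omega)).congr'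
      (hfF.symm.eventuallyEq_of_mem (Ici_mem_atTop 0))
  · rw [hf0]
    exact ⟨sub_nonneg.2 measureReal_le_one, sub_le_self _ measureReal_nonneg⟩
end
end

section
/- Let d ≥ 2 and let F be the distribution function of a nonnegative random variable. If f is the Williamson d-transform of F, then for every x ∈ (0,∞), F(x) = 1 - Σ_{k=0}^{d-2} (-1)^k x^k f^{(k)}(x)/k! - (-1)^{d-1} x^{d-1} f₊^{(d-1)}(x)/(d-1)!, where f₊^{(d-1)} denotes the right-hand derivative of f^{(d-2)}. -/
open Set MeasureTheory ProbabilityTheory Filter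

noncomputable section

open Topology

/-!
Differentiating under the integral sign,
`f⁽ʲ⁾(x) = (-1)ʲ (d-1)!/(d-1-j)! · E[(1 - x/X)₊^(d-1-j) / Xʲ]` for `j ≤ d - 2`, and the same
formula with `j = d - 1` holds for the right derivative, where the kernel degenerates to
`1_{x < X} / X^(d-1)`. The right-hand side of the inversion formula is
therefore `1 - E[1_{x < X} ∑ⱼ C(d-1, j) (x/X)ʲ (1 - x/X)^(d-1-j)] = 1 - P(X > x)`, by the
binomial theorem.
-/

theorem hasDerivWithinAt_integral_of_dominated_loc_of_lip {α E : Type*} [MeasurableSpace α]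
    [NormedAddCommGroup E] [NormedSpace ℝ E]
    {μ : Measure α} {F : ℝ → α → E} {F' : α → E} {bound : α → ℝ} {x₀ : ℝ} {s u : Set ℝ}
    (hu : u ∈ 𝓝 x₀) (hF_int : ∀ y ∈ u, Integrable (F y) μ)
    (h_lip : ∀ᵐ a ∂μ, LipschitzOnWith (Real.nnabs (bound a)) (F · a) u)
    (bound_integrable : Integrable bound μ)
    (h_diff : ∀ᵐ a ∂μ, HasDerivWithinAt (F · a) (F' a) s x₀) :
    HasDerivWithinAt (fun y ↦ ∫ a, F y a ∂μ) (∫ a, F' a ∂μ) s x₀ := by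
  have hx₀ : x₀ ∈ u := mem_of_mem_nhds hu
  have hu' : ∀ᶠ y in 𝓝[s \ {x₀}] x₀, y ∈ u := nhdsWithin_le_nhds hu
  have h_slope : ∀ y ∈ u, Integrable (fun a ↦ slope (F · a) x₀ y) μ := fun y hy ↦ by
    simp only [slope_def_module]
    exact ((hF_int y hy).sub (hF_int x₀ hx₀)).smul (y - x₀)⁻¹
  rw [hasDerivWithinAt_iff_tendsto_slope]
  refine (tendsto_integral_filter_of_dominated_convergence (fun a ↦ |bound a|)
    (hu'.mono fun y hy ↦ (h_slope y hy).aestronglyMeasurable) ?_ bound_integrable.abs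
    (h_diff.mono fun a ha ↦ hasDerivWithinAt_iff_tendsto_slope.1 ha)).congr' ?_
  · filter_upwards [hu', self_mem_nhdsWithin] with y hy hy'
    filter_upwards [h_lip] with a ha
    have hyx₀ : 0 < ‖y - x₀‖ := norm_pos_iff.2 (sub_ne_zero.2 hy'.2)
    rw [slope_def_module, norm_smul, norm_inv, inv_mul_le_iff₀ hyx₀, mul_comm]
    simpa [← dist_eq_norm] using ha.dist_le_mul y hy x₀ hx₀
  · filter_upwards [hu'] with y hy
    simp only [slope_def_module]
    rw [integral_smul, integral_sub (hF_int y hy) (hF_int x₀ hx₀)]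

section Kernel

def williamsonKernel (m k : ℕ) (t y : ℝ) : ℝ := if y < t then (1 - y / t) ^ m / t ^ k else 0

variable {m k : ℕ} {t y c : ℝ}

namespace williamsonKernel

lemma of_lt (h : y < t) : williamsonKernel m k t y = (1 - y / t) ^ m / t ^ k := if_pos h

lemma of_le (h : t ≤ y) : williamsonKernel m k t y = 0 := if_neg h.not_gt

end williamsonKernel

open williamsonKernel

lemma measurable_williamsonKernel (m k : ℕ) (y : ℝ) :
    Measurable fun t ↦ williamsonKernel m k t y :=
  Measurable.ite measurableSet_Ioi (by fun_prop) measurable_const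

lemma williamsonKernel_eq_max (ht : 0 < t) (hm : m ≠ 0) :
    williamsonKernel m k t = fun y ↦ max (1 - y / t) 0 ^ m / t ^ k := by
  ext y
  rcases lt_or_ge y t with hyt | hty
  · rw [of_lt hyt, max_eq_left (by linarith [(div_lt_one ht).2 hyt])]
  · rw [of_le hty, max_eq_right (by linarith [(one_le_div ht).2 hty]), zero_pow hm, zero_div]

lemma abs_williamsonKernel_le (hy : 0 < y) : |williamsonKernel m k t y| ≤ (y ^ k)⁻¹ := by
  rcases lt_or_ge y t with hyt | hty
  · have ht : 0 < t := hy.trans hyt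
    have h1 : 0 ≤ 1 - y / t := by linarith [(div_lt_one ht).2 hyt]
    have h2 : 1 - y / t ≤ 1 := by linarith [div_nonneg hy.le ht.le]
    rw [of_lt hyt, abs_of_nonneg (by positivity), div_eq_mul_inv]
    calc (1 - y / t) ^ m * (t ^ k)⁻¹ ≤ 1 * (y ^ k)⁻¹ := by
          gcongr
          exact pow_le_one₀ h1 h2
      _ = (y ^ k)⁻¹ := one_mul _
  · rw [of_le hty, abs_zero]
    positivity

lemma lipschitzOnWith_williamsonKernel (hc : 0 < c) (hm : m ≠ 0) :
    LipschitzOnWith (Real.nnabs (m / c ^ (k + 1))) (williamsonKernel m k t) (Ioi c) := by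
  apply LipschitzOnWith.of_dist_le_mul
  intro a ha b hb
  rw [Real.coe_nnabs, abs_of_nonneg (by positivity), Real.dist_eq, Real.dist_eq]
  rcases le_or_gt t c with htc | hct
  · rw [of_le (htc.trans (le_of_lt ha)), of_le (htc.trans (le_of_lt hb)), sub_zero, abs_zero]
    positivity
  have ht : 0 < t := hc.trans hct
  have h01 : ∀ z ∈ Ioi c, |max (1 - z / t) 0| ≤ 1 := fun z hz ↦ by
    rw [abs_of_nonneg (le_max_right _ _)]
    exact max_le (by linarith [div_nonneg (hc.le.trans (le_of_lt hz)) ht.le]) zero_le_one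
  have hmax : |max (1 - a / t) 0 - max (1 - b / t) 0| ≤ |a - b| / t := by
    refine (abs_max_sub_max_le_abs _ _ _).trans_eq ?_
    rw [show 1 - a / t - (1 - b / t) = -((a - b) / t) by ring, abs_neg, abs_div, abs_of_pos ht]
  rw [williamsonKernel_eq_max ht hm, ← sub_div, abs_div, abs_of_pos (pow_pos ht k)]
  calc |max (1 - a / t) 0 ^ m - max (1 - b / t) 0 ^ m| / t ^ k
      ≤ |a - b| / t * m * 1 ^ (m - 1) / t ^ k := by
        gcongr
        exact (abs_pow_sub_pow_le ..).trans (by gcongr; exact max_le (h01 a ha) (h01 b hb))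
    _ = m / t ^ (k + 1) * |a - b| := by rw [one_pow, mul_one, pow_succ]; field_simp
    _ ≤ m / c ^ (k + 1) * |a - b| := by gcongr

lemma hasDerivAt_max_zero_pow_s7 {n : ℕ} (hn : 2 ≤ n) (u : ℝ) :
    HasDerivAt (fun u ↦ max u 0 ^ n) (n * max u 0 ^ (n - 1)) u := by
  refine hasDerivAt_of_hasDerivAt_of_ne' (f := fun u ↦ max u 0 ^ n)
    (g := fun u ↦ n * max u 0 ^ (n - 1)) (x := 0) (fun v hv ↦ ?_)
    ((continuous_id.max continuous_const).pow n).continuousAt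
    (continuous_const.mul ((continuous_id.max continuous_const).pow (n - 1))).continuousAt u
  rcases hv.lt_or_gt with hv | hv
  · have h : (fun u ↦ max u 0 ^ n) =ᶠ[𝓝 v] fun _ ↦ 0 := by
      filter_upwards [gt_mem_nhds hv] with w hw
      rw [max_eq_right hw.le, zero_pow (by omega)]
    rw [max_eq_right hv.le, zero_pow (by omega), mul_zero]
    exact (hasDerivAt_const v 0).congr_of_eventuallyEq h
  · have h : (fun u ↦ max u 0 ^ n) =ᶠ[𝓝 v] fun u ↦ u ^ n := by
      filter_upwards [lt_mem_nhds hv] with w hw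
      rw [max_eq_left hw.le]
    rw [max_eq_left hv.le]
    exact (hasDerivAt_pow n v).congr_of_eventuallyEq h

lemma hasDerivAt_williamsonKernel (hm : 2 ≤ m) (hy : 0 < y) :
    HasDerivAt (williamsonKernel m k t) (-m * williamsonKernel (m - 1) (k + 1) t y) y := by
  rcases le_or_gt t 0 with ht | ht
  · have h : williamsonKernel m k t =ᶠ[𝓝 y] fun _ ↦ 0 := by
      filter_upwards [lt_mem_nhds hy] with z hz
      exact of_le (ht.trans hz.le)
    rw [of_le (ht.trans hy.le), mul_zero]
    exact (hasDerivAt_const y 0).congr_of_eventuallyEq h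
  rw [williamsonKernel_eq_max ht (by omega), williamsonKernel_eq_max ht (by omega)]
  refine (((hasDerivAt_max_zero_pow_s7 hm _).comp y (HasDerivAt.const_sub 1
    ((hasDerivAt_id' y).div_const t))).div_const (t ^ k)).congr_deriv ?_
  rw [pow_succ]
  field_simp

lemma hasDerivWithinAt_williamsonKernel_one :
    HasDerivWithinAt (williamsonKernel 1 k t) (-williamsonKernel 0 (k + 1) t y) (Ici y) y := by
  rcases lt_or_ge y t with hyt | hty
  · have h : williamsonKernel 1 k t =ᶠ[𝓝 y] fun z ↦ (1 - z / t) / t ^ k := by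
      filter_upwards [gt_mem_nhds hyt] with z hz
      rw [of_lt hz, pow_one]
    rw [of_lt hyt]
    refine ((((HasDerivAt.const_sub 1 ((hasDerivAt_id' y).div_const t)).div_const (t ^ k)
      ).congr_of_eventuallyEq h).hasDerivWithinAt).congr_deriv ?_
    rw [pow_zero, pow_succ]
    field_simp
  · rw [of_le hty, neg_zero]
    exact (hasDerivWithinAt_const y _ 0).congr (fun z hz ↦ of_le (hty.trans hz)) (of_le hty)

lemma sum_choose_mul_williamsonKernel (n : ℕ) (t x : ℝ) :
    ∑ k ∈ Finset.range (n + 1), n.choose k * x ^ k * williamsonKernel (n - k) k t x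
      = if x < t then 1 else 0 := by
  split_ifs with hxt
  · refine Eq.trans ?_ (show (x / t + (1 - x / t)) ^ n = 1 by ring)
    rw [add_pow]
    refine Finset.sum_congr rfl fun k _ ↦ ?_
    rw [of_lt hxt, div_pow]
    ring
  · exact Finset.sum_eq_zero fun k _ ↦ by rw [of_le (not_lt.1 hxt), mul_zero]

end Kernel

section Integral

variable {m k : ℕ} {x y : ℝ} {Ω : Type*} [MeasurableSpace Ω] (μ : Measure Ω) (X : Ω → ℝ)

def williamsonIntegral (m k : ℕ) (y : ℝ) : ℝ := ∫ ω, williamsonKernel m k (X ω) y ∂μ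

variable [IsFiniteMeasure μ] {X} (hX : Measurable X)
include hX

lemma integrable_williamsonKernel (hy : 0 < y) :
    Integrable (fun ω ↦ williamsonKernel m k (X ω) y) μ :=
  .of_bound ((measurable_williamsonKernel m k y).comp hX).aestronglyMeasurable _
    (ae_of_all _ fun _ ↦ abs_williamsonKernel_le hy)

lemma hasDerivWithinAt_williamsonIntegral (hm : m ≠ 0) (hy : 0 < y) {s : Set ℝ}
    (h : ∀ t, HasDerivWithinAt (williamsonKernel m k t)
      (-m * williamsonKernel (m - 1) (k + 1) t y) s y) :
    HasDerivWithinAt (williamsonIntegral μ X m k)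
      (-m * williamsonIntegral μ X (m - 1) (k + 1) y) s y := by
  have h_int := hasDerivWithinAt_integral_of_dominated_loc_of_lip
    (F := fun y ω ↦ williamsonKernel m k (X ω) y) (Ioi_mem_nhds (half_lt_self hy))
    (fun z hz ↦ integrable_williamsonKernel μ hX ((half_pos hy).trans hz))
    (ae_of_all _ fun ω ↦ lipschitzOnWith_williamsonKernel (half_pos hy) hm)
    (integrable_const _) (ae_of_all _ fun ω ↦ h (X ω))
  rwa [integral_const_mul] at h_int

lemma hasDerivAt_williamsonIntegral (hm : 2 ≤ m) (hy : 0 < y) :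
    HasDerivAt (williamsonIntegral μ X m k) (-m * williamsonIntegral μ X (m - 1) (k + 1) y) y :=
  hasDerivWithinAt_univ.1 <| hasDerivWithinAt_williamsonIntegral μ hX (by omega) hy
    fun _ ↦ (hasDerivAt_williamsonKernel hm hy).hasDerivWithinAt

lemma hasDerivWithinAt_williamsonIntegral_one (hy : 0 < y) :
    HasDerivWithinAt (williamsonIntegral μ X 1 k) (-williamsonIntegral μ X 0 (k + 1) y)
      (Ici y) y := by
  simpa using hasDerivWithinAt_williamsonIntegral μ hX one_ne_zero hy
    fun _ ↦ by simpa using hasDerivWithinAt_williamsonKernel_one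

lemma iteratedDeriv_williamsonIntegral {n j : ℕ} (hj : j < n) (hy : 0 < y) :
    iteratedDeriv j (williamsonIntegral μ X n k) y
      = (-1) ^ j * n.descFactorial j * williamsonIntegral μ X (n - j) (k + j) y := by
  induction j generalizing y with
  | zero => simp
  | succ j ih =>
    have heq : iteratedDeriv j (williamsonIntegral μ X n k) =ᶠ[𝓝 y]
        fun z ↦ (-1) ^ j * n.descFactorial j * williamsonIntegral μ X (n - j) (k + j) z := by
      filter_upwards [lt_mem_nhds hy] with z hz
      exact ih (by omega) hz
    rw [iteratedDeriv_succ, heq.deriv_eq,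
      ((hasDerivAt_williamsonIntegral μ hX (by omega) hy).const_mul _).deriv,
      Nat.descFactorial_succ, show n - j - 1 = n - (j + 1) by omega, ← add_assoc]
    push_cast [Nat.cast_sub hj.le]
    ring

lemma derivWithin_iteratedDeriv_williamsonIntegral {n : ℕ} (hx : 0 < x) :
    derivWithin (iteratedDeriv n (williamsonIntegral μ X (n + 1) k)) (Ici x) x
      = (-1) ^ (n + 1) * (n + 1).descFactorial (n + 1)
        * williamsonIntegral μ X 0 (k + (n + 1)) x := by
  have heq : EqOn (iteratedDeriv n (williamsonIntegral μ X (n + 1) k))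
      (fun z ↦ (-1) ^ n * (n + 1).descFactorial n * williamsonIntegral μ X 1 (k + n) z) (Ici x) :=
    fun z hz ↦ by
      simpa using iteratedDeriv_williamsonIntegral μ hX n.lt_succ_self (hx.trans_le hz)
  rw [derivWithin_congr heq (heq self_mem_Ici),
    ((hasDerivWithinAt_williamsonIntegral_one μ hX hx).const_mul _).derivWithin
      (uniqueDiffOn_Ici x x self_mem_Ici), Nat.descFactorial_succ, Nat.add_sub_cancel_left,
    ← add_assoc]
  push_cast
  ring

lemma measureReal_lt_eq_sum_williamsonIntegral (hx : 0 < x) (n : ℕ) :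
    μ.real {ω | x < X ω}
      = ∑ k ∈ Finset.range (n + 1), n.choose k * x ^ k * williamsonIntegral μ X (n - k) k x := by
  calc μ.real {ω | x < X ω} = ∫ ω, {ω | x < X ω}.indicator 1 ω ∂μ :=
        (integral_indicator_one (measurableSet_lt measurable_const hX)).symm
    _ = ∫ ω, ∑ k ∈ Finset.range (n + 1),
          n.choose k * x ^ k * williamsonKernel (n - k) k (X ω) x ∂μ := by
        congr 1 with ω
        rw [sum_choose_mul_williamsonKernel]
        simp [indicator_apply]
    _ = _ := by
        rw [integral_finsetSum _ fun k _ ↦ (integrable_williamsonKernel μ hX hx).const_mul _]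
        simp_rw [integral_const_mul]
        rfl

end Integral

theorem stmt7_general {Ω : Type*} [MeasurableSpace Ω] (μ : Measure Ω) [IsProbabilityMeasure μ]
    (X : Ω → ℝ) (hX : Measurable X) (d : ℕ) (hd : 2 ≤ d)
    (f : ℝ → ℝ)
    (hf : ∀ x : ℝ, f x = ∫ ω, (if x < X ω then (1 - x / X ω) ^ (d - 1) else 0) ∂μ) :
    ∀ x ∈ Set.Ioi (0:ℝ),
      (μ {ω | X ω ≤ x}).toReal =
        1 - (∑ k ∈ Finset.range (d - 1),
              (-1:ℝ)^k * x^k * iteratedDeriv k f x / (k.factorial : ℝ))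
          - (-1:ℝ)^(d-1) * x^(d-1) *
              derivWithin (iteratedDeriv (d-2) f) (Set.Ici x) x / ((d-1).factorial : ℝ) := by
  intro x hx
  obtain ⟨n, rfl⟩ : ∃ n, d = n + 2 := ⟨d - 2, by omega⟩
  obtain rfl : f = williamsonIntegral μ X (n + 1) 0 :=
    funext fun y ↦ by simp [hf, williamsonIntegral, williamsonKernel]
  have taylor_term : ∀ k w, (-1 : ℝ) ^ k * x ^ k * ((-1) ^ k * (n + 1).descFactorial k * w)
      / (k.factorial : ℝ) = (n + 1).choose k * x ^ k * w := fun k w ↦ by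
    rw [Nat.descFactorial_eq_factorial_mul_choose]
    push_cast
    field_simp
    rw [← pow_mul, Even.neg_one_pow ⟨k, by ring⟩, one_mul]
  have h_compl : (μ {ω | X ω ≤ x}).toReal = 1 - μ.real {ω | x < X ω} := by
    rw [← probReal_compl_eq_one_sub (measurableSet_lt measurable_const hX), measureReal_def]
    congr 2 with ω
    simp
  have h_sum : ∑ k ∈ Finset.range (n + 1), (-1 : ℝ) ^ k * x ^ k
        * iteratedDeriv k (williamsonIntegral μ X (n + 1) 0) x / k.factorial
      = ∑ k ∈ Finset.range (n + 1), (n + 1).choose k * x ^ k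
        * williamsonIntegral μ X (n + 1 - k) k x :=
    Finset.sum_congr rfl fun k hk ↦ by
      rw [iteratedDeriv_williamsonIntegral μ hX (Finset.mem_range.1 hk) hx, zero_add, taylor_term]
  rw [h_compl, measureReal_lt_eq_sum_williamsonIntegral μ hX hx (n + 1), Finset.sum_range_succ,
    show n + 2 - 1 = n + 1 from rfl, show n + 2 - 2 = n from rfl,
    derivWithin_iteratedDeriv_williamsonIntegral μ hX hx, taylor_term, h_sum]
  simp only [Nat.choose_self, Nat.sub_self, zero_add, Nat.cast_one, one_mul, sub_sub]

/-- Inversion formula for the Williamson `d`-transform: if `f` is the Williamson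
`d`-transform of the law of a nonnegative random variable `X` with distribution
function `F`, then for every `x > 0`,
`F(x) = 1 - ∑_{k=0}^{d-2} (-1)^k x^k f^(k)(x)/k! - (-1)^(d-1) x^(d-1) f₊^(d-1)(x)/(d-1)!`,
where `f₊^(d-1)` is the right-hand derivative of `f^(d-2)`. -/
theorem stmt7 {Ω : Type*} [MeasurableSpace Ω] (μ : Measure Ω) [IsProbabilityMeasure μ]
    (X : Ω → ℝ) (hX : Measurable X) (hX0 : ∀ ω, 0 ≤ X ω) (d : ℕ) (hd : 2 ≤ d)
    (f : ℝ → ℝ)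
    (hf : ∀ x : ℝ, f x = ∫ ω, (if x < X ω then (1 - x / X ω) ^ (d - 1) else 0) ∂μ) :
    ∀ x ∈ Set.Ioi (0:ℝ),
      (μ {ω | X ω ≤ x}).toReal =
        1 - (∑ k ∈ Finset.range (d - 1),
              (-1:ℝ)^k * x^k * iteratedDeriv k f x / (k.factorial : ℝ))
          - (-1:ℝ)^(d-1) * x^(d-1) *
              derivWithin (iteratedDeriv (d-2) f) (Set.Ici x) x / ((d-1).factorial : ℝ) :=
  stmt7_general μ X hX d hd f hf

end
end

section
/- Let ψ be a 2-monotone Archimedean generator (nonincreasing, convex, ψ(0)=1, ψ(∞)=0) generating the bivariate copula C(u,v) = ψ(ψ⁻¹(u)+ψ⁻¹(v)), and let R have the radial distribution F_R = 𝔚₂⁻¹ψ. Then Kendall's tau satisfies τ(C) = 4E[ψ(R)] - 1. -/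
/-!
Put `S = ψ⁻¹ U + ψ⁻¹ V` and cut `[0, x]` at `tᵢ = i x / n`. Up to a null set, `{S ≤ x}` contains
the disjoint strips `{ψ tᵢ₊₁ < U ≤ ψ tᵢ, ψ (x - tᵢ₊₁) < V}` and is covered by the strips
`{ψ tᵢ₊₁ < U ≤ ψ tᵢ, ψ (x - tᵢ + δ) < V}` together with `{0 < U ≤ ψ x, ψ δ < V}`. The `C`-volume
of a strip is a second difference of `ψ`, so both sums telescope, and as `δ → 0`, `n → ∞` the two
bounds tend to `1 - ψ x + x ψ'(x)` wherever `ψ` is differentiable, i.e. almost everywhere since `ψ`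
is monotone. Distribution functions that agree almost everywhere agree everywhere by
right-continuity, so `S` has the law of `R` and `E ψ(S) = E ψ(R)`.
-/

open Set MeasureTheory ProbabilityTheory Filter

noncomputable section

/-- An Archimedean generator: a continuous nonincreasing function `ψ : [0,∞) → [0,1]`
with `ψ 0 = 1`, `ψ(∞) = 0`, strictly decreasing where it is positive. -/
def IsArchGen (ψ : ℝ → ℝ) : Prop :=
  ContinuousOn ψ (Set.Ici 0) ∧ AntitoneOn ψ (Set.Ici 0) ∧ ψ 0 = 1 ∧
  Filter.Tendsto ψ Filter.atTop (nhds 0) ∧ (∀ x ∈ Set.Ici (0:ℝ), 0 ≤ ψ x ∧ ψ x ≤ 1) ∧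
  StrictAntiOn ψ {x | 0 ≤ x ∧ 0 < ψ x}

/-- Generalized inverse of an Archimedean generator, with the convention
`ψ⁻¹ 0 = inf {x | ψ x = 0}`. -/
def psiInv (ψ : ℝ → ℝ) (u : ℝ) : ℝ := sInf {x | 0 ≤ x ∧ ψ x ≤ u}

open scoped Topology

theorem MeasureTheory.Measure.eq_of_cdf_ae_eq (μ ν : Measure ℝ) [IsProbabilityMeasure μ]
    [IsProbabilityMeasure ν] (h : cdf μ =ᵐ[volume] cdf ν) : μ = ν := by
  refine Measure.eq_of_cdf μ ν (StieltjesFunction.ext fun y => ?_)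
  set E := {x | cdf μ x = cdf ν x} ∩ Ioi y
  have hE : (𝓝[E] y).NeBot := by
    rw [← mem_closure_iff_nhdsWithin_neBot, Metric.mem_closure_iff]
    intro ε hε
    obtain ⟨x, hx, hxE⟩ := Measure.exists_mem_of_measure_ne_zero_of_ae
      (s := Ioo y (y + ε)) (by simp [hε]) (ae_restrict_of_ae h)
    refine ⟨x, ⟨hxE, hx.1⟩, ?_⟩
    rw [Real.dist_eq, abs_sub_comm, abs_of_pos (sub_pos.mpr hx.1)]
    linarith [hx.2]
  have hlim (F : StieltjesFunction ℝ) : Tendsto F (𝓝[E] y) (𝓝 (F y)) :=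
    ((F.right_continuous y).mono fun x hx => le_of_lt (mem_Ioi.mp hx.2)).tendsto
  exact tendsto_nhds_unique (hlim _)
    ((hlim _).congr' (eventually_nhdsWithin_of_forall fun x hx => hx.1.symm))

theorem HasDerivAt.tendsto_nat_mul_sub {f : ℝ → ℝ} {f' x : ℝ} (hf : HasDerivAt f f' x) (c : ℝ) :
    Tendsto (fun n : ℕ => n * (f (x + c / n) - f x)) atTop (𝓝 (c * f')) := by
  rcases eq_or_ne c 0 with rfl | hc
  · simp
  have hseq : Tendsto (fun n : ℕ => c / n) atTop (𝓝[≠] 0) :=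
    tendsto_nhdsWithin_iff.mpr ⟨tendsto_const_div_atTop_nhds_zero_nat c,
      eventually_atTop.mpr ⟨1, fun n hn => div_ne_zero hc (by positivity)⟩⟩
  refine ((hf.tendsto_slope_zero.comp hseq).const_mul c).congr' ?_
  filter_upwards [eventually_ne_atTop 0] with n hn
  simp only [Function.comp_apply, smul_eq_mul, inv_div]
  field_simp

theorem AntitoneOn.ae_differentiableAt {f : ℝ → ℝ} {s : Set ℝ} (hf : AntitoneOn f s)
    (hs : IsOpen s) : ∀ᵐ x, x ∈ s → DifferentiableAt ℝ f x := by
  have hmono : MonotoneOn (fun x => -f x) s := fun a ha b hb hab => neg_le_neg (hf ha hb hab)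
  filter_upwards [hmono.ae_differentiableWithinAt_of_mem] with x hx hxs
  simpa using ((hx hxs).differentiableAt (hs.mem_nhds hxs)).neg

theorem ProbabilityTheory.IdentDistrib.integral_comp_of_continuousOn {Ω Ω' : Type*}
    [MeasurableSpace Ω] [MeasurableSpace Ω'] {μ : Measure Ω} {ν : Measure Ω'}
    {X : Ω → ℝ} {Y : Ω' → ℝ} {f : ℝ → ℝ} {s : Set ℝ} (h : IdentDistrib X Y μ ν)
    (hf : ContinuousOn f s) (hs : MeasurableSet s) (hX : ∀ᵐ ω ∂μ, X ω ∈ s) :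
    ∫ ω, f (X ω) ∂μ = ∫ ω, f (Y ω) ∂ν := by
  have hfm : AEStronglyMeasurable f (μ.map X) := by
    rw [← Measure.restrict_eq_self_of_ae_mem ((ae_map_iff h.aemeasurable_fst hs).mpr hX)]
    exact hf.aestronglyMeasurable hs
  exact (h.comp_of_aemeasurable hfm.aemeasurable).integral_eq

theorem Finset.sum_range_sub_uniform_partition (f : ℝ → ℝ) (x K : ℝ) {n : ℕ} (hn : n ≠ 0) :
    ∑ i ∈ range n, (f (i * (x / n)) - f ((i + 1 : ℕ) * (x / n)) - K) = f 0 - f x - n * K := by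
  rw [sum_sub_distrib, sum_range_sub' (fun i : ℕ => f (i * (x / n))), sum_const, card_range,
    nsmul_eq_mul, Nat.cast_zero, zero_mul, mul_div_cancel₀ x (Nat.cast_ne_zero.mpr hn)]

theorem natCast_mul_div_le {x : ℝ} (hx : 0 ≤ x) {i n : ℕ} (hi : i ≤ n) :
    (i : ℝ) * (x / n) ≤ x := by
  rcases Nat.eq_zero_or_pos n with rfl | hn
  · simpa using hx
  calc (i : ℝ) * (x / n) ≤ n * (x / n) := by gcongr
    _ = x := mul_div_cancel₀ x (by positivity)

section GeneralizedInverse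

variable {ψ : ℝ → ℝ} {v a c d : ℝ}

theorem psiInv_nonneg : 0 ≤ psiInv ψ v := Real.sInf_nonneg fun _ hx => hx.1

theorem psiInv_le_of_psi_le (hc : 0 ≤ c) (h : ψ c ≤ v) : psiInv ψ v ≤ c :=
  csInf_le ⟨0, fun _ hx => hx.1⟩ ⟨hc, h⟩

namespace IsArchGen

theorem continuousOn (hψ : IsArchGen ψ) : ContinuousOn ψ (Ici 0) := hψ.1

theorem antitoneOn (hψ : IsArchGen ψ) : AntitoneOn ψ (Ici 0) := hψ.2.1

theorem map_zero (hψ : IsArchGen ψ) : ψ 0 = 1 := hψ.2.2.1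

theorem mem_Icc (hψ : IsArchGen ψ) (hc : 0 ≤ c) : ψ c ∈ Icc 0 1 := hψ.2.2.2.2.1 c hc

theorem strictAntiOn (hψ : IsArchGen ψ) : StrictAntiOn ψ {x | 0 ≤ x ∧ 0 < ψ x} := hψ.2.2.2.2.2

theorem psiInv_one (hψ : IsArchGen ψ) : psiInv ψ 1 = 0 :=
  le_antisymm (psiInv_le_of_psi_le le_rfl hψ.map_zero.le) psiInv_nonneg

theorem psi_eq_zero_of_le (hψ : IsArchGen ψ) (ha : 0 ≤ a) (hψa : ψ a = 0) (hac : a ≤ c) :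
    ψ c = 0 :=
  le_antisymm (hψa ▸ hψ.antitoneOn ha (ha.trans hac) hac) (hψ.mem_Icc (ha.trans hac)).1

theorem psi_psiInv (hψ : IsArchGen ψ) (hex : ∃ z, 0 ≤ z ∧ ψ z = 0) (hv : v ∈ Icc 0 1) :
    ψ (psiInv ψ v) = v := by
  obtain ⟨hcont, hanti, hone, -, -, -⟩ := hψ
  obtain ⟨z, hz0, hz⟩ := hex
  have hclosed : IsClosed {x | 0 ≤ x ∧ ψ x ≤ v} :=
    hcont.preimage_isClosed_of_isClosed isClosed_Ici isClosed_Iic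
  have hmem : psiInv ψ v ∈ {x | 0 ≤ x ∧ ψ x ≤ v} :=
    hclosed.csInf_mem ⟨z, hz0, hz ▸ hv.1⟩ ⟨0, fun _ hx => hx.1⟩
  obtain ⟨y, hy, hyv⟩ := intermediate_value_Icc' hz0 (hcont.mono Icc_subset_Ici_self)
    ⟨hz ▸ hv.1, hone ▸ hv.2⟩
  refine le_antisymm hmem.2 ?_
  calc v = ψ y := hyv.symm
    _ ≤ ψ (psiInv ψ v) := hanti hmem.1 hy.1 (psiInv_le_of_psi_le hy.1 hyv.le)

theorem psiInv_psi (hψ : IsArchGen ψ) (hc : 0 ≤ c) (hpos : 0 < ψ c) : psiInv ψ (ψ c) = c := by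
  refine le_antisymm (psiInv_le_of_psi_le hc le_rfl) (le_csInf ⟨c, hc, le_rfl⟩ ?_)
  rintro x ⟨hx, hxc⟩
  by_contra! hlt
  have hψx : 0 < ψ x := hpos.trans_le (hψ.antitoneOn hx hc hlt.le)
  exact (hψ.strictAntiOn ⟨hx, hψx⟩ ⟨hc, hpos⟩ hlt).not_ge hxc

theorem psi_psiInv_psi_add (hψ : IsArchGen ψ) (hex : ∃ z, 0 ≤ z ∧ ψ z = 0) (ha : 0 ≤ a)
    (hd : 0 ≤ d) : ψ (psiInv ψ (ψ a) + d) = ψ (a + d) := by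
  rcases (hψ.mem_Icc ha).1.eq_or_lt with h0 | hpos
  · have hinv : ψ (psiInv ψ (ψ a)) = 0 := by
      rw [← h0]; exact hψ.psi_psiInv hex ⟨le_rfl, zero_le_one⟩
    rw [hψ.psi_eq_zero_of_le psiInv_nonneg hinv (le_add_of_nonneg_right hd),
      hψ.psi_eq_zero_of_le ha h0.symm (le_add_of_nonneg_right hd)]
  · rw [hψ.psiInv_psi ha hpos]

theorem psi_psiInv_psi_add_psiInv_psi (hψ : IsArchGen ψ) (hex : ∃ z, 0 ≤ z ∧ ψ z = 0)
    (ha : 0 ≤ a) (hc : 0 ≤ c) : ψ (psiInv ψ (ψ a) + psiInv ψ (ψ c)) = ψ (a + c) := by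
  rw [hψ.psi_psiInv_psi_add hex ha psiInv_nonneg, add_comm,
    hψ.psi_psiInv_psi_add hex hc ha, add_comm]

theorem le_psi_of_le_psiInv (hψ : IsArchGen ψ) (hex : ∃ z, 0 ≤ z ∧ ψ z = 0)
    (hv : v ∈ Icc 0 1) (hc : 0 ≤ c) (h : c ≤ psiInv ψ v) : v ≤ ψ c :=
  hψ.psi_psiInv hex hv ▸ hψ.antitoneOn hc psiInv_nonneg h

theorem psi_lt_of_psiInv_lt (hψ : IsArchGen ψ) (hex : ∃ z, 0 ≤ z ∧ ψ z = 0) (hv : 0 < v)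
    (hc : 0 ≤ c) (h : psiInv ψ v < c) : ψ c < v := by
  rcases (hψ.mem_Icc hc).1.eq_or_lt with h0 | hpos
  · rwa [← h0]
  rcases le_or_gt v 1 with hv1 | hv1
  · have hinv := hψ.psi_psiInv hex ⟨hv.le, hv1⟩
    have hlt := hψ.strictAntiOn ⟨psiInv_nonneg, by rwa [hinv]⟩ ⟨hc, hpos⟩ h
    rwa [hinv] at hlt
  · exact (hψ.mem_Icc hc).2.trans_lt hv1

theorem measurable_psiInv (hψ : IsArchGen ψ) (hex : ∃ z, 0 ≤ z ∧ ψ z = 0) :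
    Measurable (psiInv ψ) := by
  obtain ⟨z, hz0, hz⟩ := hex
  have hanti : Antitone fun u => psiInv ψ (max u 0) := fun u w huw =>
    csInf_le_csInf ⟨0, fun _ hx => hx.1⟩ ⟨z, hz0, hz ▸ le_max_right _ _⟩
      fun x hx => ⟨hx.1, hx.2.trans (max_le_max huw le_rfl)⟩
  have hsplit : psiInv ψ = fun u => if 0 ≤ u then psiInv ψ (max u 0) else 0 := by
    funext u
    split_ifs with hu
    · rw [max_eq_left hu]
    · have hempty : {x | 0 ≤ x ∧ ψ x ≤ u} = ∅ :=
        eq_empty_of_forall_notMem fun x hx => hu (le_trans (hψ.mem_Icc hx.1).1 hx.2)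
      rw [psiInv, hempty, Real.sInf_empty]
  rw [hsplit]
  exact Measurable.ite measurableSet_Ici hanti.measurable measurable_const

end IsArchGen

end GeneralizedInverse

def IsArchCopulaLaw {Ω : Type*} [MeasurableSpace Ω] (ν : Measure Ω) (ψ : ℝ → ℝ)
    (U V : Ω → ℝ) : Prop :=
  ∀ u ∈ Icc (0:ℝ) 1, ∀ v ∈ Icc (0:ℝ) 1,
    ν.real {ω | U ω ≤ u ∧ V ω ≤ v} = ψ (psiInv ψ u + psiInv ψ v)

namespace IsArchCopulaLaw

variable {Ω : Type*} [MeasurableSpace Ω] {ν : Measure Ω} {ψ : ℝ → ℝ} {U V : Ω → ℝ}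

/-- Since `sInf ∅ = 0`, a generator without zeros has `psiInv ψ 0 = 0`, so `C(0, 1) = 1`,
which contradicts `C(0, 1) ≤ C(ψ 1, 1) = ψ 1 < 1`. -/
theorem exists_psi_eq_zero [IsFiniteMeasure ν] (hC : IsArchCopulaLaw ν ψ U V)
    (hψ : IsArchGen ψ) : ∃ z, 0 ≤ z ∧ ψ z = 0 := by
  by_contra! hne
  have hpos : ∀ z, 0 ≤ z → 0 < ψ z := fun z hz =>
    (hψ.mem_Icc hz).1.lt_of_ne (hne z hz).symm
  have hinv0 : psiInv ψ 0 = 0 := by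
    have hempty : {x | 0 ≤ x ∧ ψ x ≤ 0} = ∅ :=
      eq_empty_of_forall_notMem fun x hx => (hpos x hx.1).not_ge hx.2
    rw [psiInv, hempty, Real.sInf_empty]
  have hψ1 : ψ 1 < 1 := by
    simpa [hψ.map_zero] using
      hψ.strictAntiOn ⟨le_rfl, hpos 0 le_rfl⟩ ⟨zero_le_one, hpos 1 zero_le_one⟩ one_pos
  have hmono : ν.real {ω | U ω ≤ 0 ∧ V ω ≤ 1} ≤ ν.real {ω | U ω ≤ ψ 1 ∧ V ω ≤ 1} :=
    measureReal_mono fun ω hω => ⟨hω.1.trans (hpos 1 zero_le_one).le, hω.2⟩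
  rw [hC 0 ⟨le_rfl, zero_le_one⟩ 1 ⟨zero_le_one, le_rfl⟩,
    hC (ψ 1) ⟨(hpos 1 zero_le_one).le, hψ1.le⟩ 1 ⟨zero_le_one, le_rfl⟩, hinv0, hψ.psiInv_one,
    hψ.psiInv_psi zero_le_one (hpos 1 zero_le_one), add_zero, add_zero, hψ.map_zero] at hmono
  linarith

variable [IsProbabilityMeasure ν] {x : ℝ} {n : ℕ}

theorem ae_mem_Ioc (hC : IsArchCopulaLaw ν ψ U V) (hψ : IsArchGen ψ)
    (hex : ∃ z, 0 ≤ z ∧ ψ z = 0) (hU : Measurable U) (hV : Measurable V) :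
    ∀ᵐ ω ∂ν, U ω ∈ Ioc 0 1 ∧ V ω ∈ Ioc 0 1 := by
  have hψinv0 : ψ (psiInv ψ 0) = 0 := hψ.psi_psiInv hex ⟨le_rfl, zero_le_one⟩
  have hnull {u v : ℝ} (hu : u ∈ Icc (0:ℝ) 1) (hv : v ∈ Icc (0:ℝ) 1)
      (h0 : ψ (psiInv ψ u + psiInv ψ v) = 0) : ∀ᵐ ω ∂ν, ¬(U ω ≤ u ∧ V ω ≤ v) := by
    simp only [ae_iff, not_not]
    exact (measureReal_eq_zero_iff).mp (h0 ▸ hC u hu v hv)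
  have hle : ∀ᵐ ω ∂ν, U ω ≤ 1 ∧ V ω ≤ 1 := by
    have h1 := hC 1 ⟨zero_le_one, le_rfl⟩ 1 ⟨zero_le_one, le_rfl⟩
    rw [hψ.psiInv_one, add_zero, hψ.map_zero, measureReal_def, ENNReal.toReal_eq_one_iff] at h1
    exact ae_iff.mpr ((prob_compl_eq_zero_iff
      ((hU measurableSet_Iic).inter (hV measurableSet_Iic))).mpr h1)
  have hU0 := hnull ⟨le_rfl, zero_le_one⟩ ⟨zero_le_one, le_rfl⟩
    (by rw [hψ.psiInv_one, add_zero]; exact hψinv0)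
  have hV0 := hnull ⟨zero_le_one, le_rfl⟩ ⟨le_rfl, zero_le_one⟩
    (by rw [hψ.psiInv_one, zero_add]; exact hψinv0)
  filter_upwards [hle, hU0, hV0] with ω h1 h2 h3
  exact ⟨⟨not_le.mp fun h => h2 ⟨h, h1.2⟩, h1.1⟩, ⟨not_le.mp fun h => h3 ⟨h1.1, h⟩, h1.2⟩⟩

theorem measureReal_strip (hC : IsArchCopulaLaw ν ψ U V) (hψ : IsArchGen ψ)
    (hex : ∃ z, 0 ≤ z ∧ ψ z = 0) (hU : Measurable U) (hV : Measurable V) {a b c : ℝ}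
    (ha : 0 ≤ a) (hab : a ≤ b) (hc : 0 ≤ c) :
    ν.real {ω | U ω ∈ Ioc (ψ b) (ψ a) ∧ ψ c < V ω} = ψ a - ψ b - (ψ (a + c) - ψ (b + c)) := by
  have hb : 0 ≤ b := ha.trans hab
  have hmeas : ∀ w, MeasurableSet {ω | U ω ∈ Ioc (ψ b) (ψ a) ∧ V ω ≤ w} := fun w =>
    (hU measurableSet_Ioc).inter (hV measurableSet_Iic)
  have hband : ∀ e, 0 ≤ e →
      ν.real {ω | U ω ∈ Ioc (ψ b) (ψ a) ∧ V ω ≤ ψ e} = ψ (a + e) - ψ (b + e) := by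
    intro e he
    have hdiff : {ω | U ω ∈ Ioc (ψ b) (ψ a) ∧ V ω ≤ ψ e}
        = {ω | U ω ≤ ψ a ∧ V ω ≤ ψ e} \ {ω | U ω ≤ ψ b ∧ V ω ≤ ψ e} := by
      ext ω
      simp only [mem_Ioc, mem_ofPred_eq, Set.mem_sdiff, not_and, not_le]
      constructor
      · rintro ⟨⟨hb', ha'⟩, he'⟩
        exact ⟨⟨ha', he'⟩, fun h => absurd h (not_le.mpr hb')⟩
      · rintro ⟨⟨ha', he'⟩, hb'⟩
        exact ⟨⟨not_le.mp fun h => (hb' h).not_ge he', ha'⟩, he'⟩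
    have hsub : {ω | U ω ≤ ψ b ∧ V ω ≤ ψ e} ⊆ {ω | U ω ≤ ψ a ∧ V ω ≤ ψ e} :=
      fun ω hω => ⟨hω.1.trans (hψ.antitoneOn ha hb hab), hω.2⟩
    rw [hdiff, measureReal_sdiff hsub ((hU measurableSet_Iic).inter (hV measurableSet_Iic)),
      hC _ (hψ.mem_Icc ha) _ (hψ.mem_Icc he), hC _ (hψ.mem_Icc hb) _ (hψ.mem_Icc he),
      hψ.psi_psiInv_psi_add_psiInv_psi hex ha he, hψ.psi_psiInv_psi_add_psiInv_psi hex hb he]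
  have hstrip : {ω | U ω ∈ Ioc (ψ b) (ψ a) ∧ ψ c < V ω}
      =ᵐ[ν] ({ω | U ω ∈ Ioc (ψ b) (ψ a) ∧ V ω ≤ ψ 0} \
        {ω | U ω ∈ Ioc (ψ b) (ψ a) ∧ V ω ≤ ψ c} : Set Ω) := by
    refine eventuallyEq_set.mpr ?_
    filter_upwards [hC.ae_mem_Ioc hψ hex hU hV] with ω hω
    simp only [mem_ofPred_eq, Set.mem_sdiff, not_and, not_le, hψ.map_zero]
    exact ⟨fun h => ⟨⟨h.1, hω.2.2⟩, fun _ => h.2⟩, fun h => ⟨h.1.1, h.2 h.1.1⟩⟩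
  have hsub : {ω | U ω ∈ Ioc (ψ b) (ψ a) ∧ V ω ≤ ψ c} ⊆
      {ω | U ω ∈ Ioc (ψ b) (ψ a) ∧ V ω ≤ ψ 0} :=
    fun ω hω => ⟨hω.1, hω.2.trans (hψ.antitoneOn self_mem_Ici hc hc)⟩
  rw [measureReal_congr hstrip, measureReal_sdiff hsub (hmeas _),
    hband 0 le_rfl, hband c hc, add_zero, add_zero]

theorem le_measureReal_psiInv_add_le (hC : IsArchCopulaLaw ν ψ U V) (hψ : IsArchGen ψ)
    (hex : ∃ z, 0 ≤ z ∧ ψ z = 0) (hU : Measurable U) (hV : Measurable V) (hx : 0 < x)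
    (hn : 0 < n) :
    1 - ψ x - n * (ψ (x + -x / n) - ψ x)
      ≤ ν.real {ω | psiInv ψ (U ω) + psiInv ψ (V ω) ≤ x} := by
  set h := x / n
  have hh0 : 0 < h := div_pos hx (Nat.cast_pos.mpr hn)
  have ht0 (i : ℕ) : 0 ≤ (i : ℝ) * h := by positivity
  set B : ℕ → Set Ω := fun i =>
    {ω | U ω ∈ Ioc (ψ ((i + 1 : ℕ) * h)) (ψ (i * h)) ∧ ψ (x - (i + 1 : ℕ) * h) < V ω}
  have hmass {i : ℕ} (hi : i < n) :
      ν.real (B i) = ψ (i * h) - ψ ((i + 1 : ℕ) * h) - (ψ (x + -x / n) - ψ x) := by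
    have hsum₁ : (i : ℝ) * h + (x - (i + 1 : ℕ) * h) = x + -x / n := by push_cast; ring
    have hsum₂ : ((i + 1 : ℕ) : ℝ) * h + (x - (i + 1 : ℕ) * h) = x := by ring
    rw [hC.measureReal_strip hψ hex hU hV (ht0 i) (by gcongr; omega)
      (sub_nonneg.mpr (natCast_mul_div_le hx.le hi)), hsum₁, hsum₂]
  have hsub {i : ℕ} (hi : i < n) : B i ⊆ {ω | psiInv ψ (U ω) + psiInv ψ (V ω) ≤ x} := by
    rintro ω ⟨hUi, hVi⟩
    have hUle := psiInv_le_of_psi_le (ht0 (i + 1)) hUi.1.le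
    have hVle := psiInv_le_of_psi_le (sub_nonneg.mpr (natCast_mul_div_le hx.le hi)) hVi.le
    exact (add_le_add hUle hVle).trans_eq (add_sub_cancel _ _)
  have hdisj : (Finset.range n : Set ℕ).PairwiseDisjoint B := by
    have hanti : Antitone fun i : ℕ => ψ (i * h) := fun i j hij =>
      hψ.antitoneOn (ht0 i) (ht0 j) (by gcongr)
    intro i _ j _ hij
    exact ((hanti.pairwise_disjoint_on_Ioc_succ hij).preimage U).mono
      (fun ω hω => hω.1) (fun ω hω => hω.1)
  calc 1 - ψ x - n * (ψ (x + -x / n) - ψ x)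
      = ∑ i ∈ Finset.range n, ν.real (B i) := by
        rw [← hψ.map_zero, ← Finset.sum_range_sub_uniform_partition ψ x _ hn.ne']
        exact Finset.sum_congr rfl fun i hi => (hmass (Finset.mem_range.mp hi)).symm
    _ = ν.real (⋃ i ∈ Finset.range n, B i) := (measureReal_biUnion_finset hdisj fun i _ =>
        (hU measurableSet_Ioc).inter (hV measurableSet_Ioi)).symm
    _ ≤ _ := measureReal_mono (iUnion₂_subset fun i hi => hsub (Finset.mem_range.mp hi))

theorem measureReal_psiInv_add_le_le (hC : IsArchCopulaLaw ν ψ U V) (hψ : IsArchGen ψ)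
    (hex : ∃ z, 0 ≤ z ∧ ψ z = 0) (hU : Measurable U) (hV : Measurable V) (hx : 0 < x)
    (hn : 0 < n) {δ : ℝ} (hδ : 0 < δ) :
    ν.real {ω | psiInv ψ (U ω) + psiInv ψ (V ω) ≤ x}
      ≤ 1 - ψ (x + δ) + n * (ψ (x + x / n + δ) - ψ (x + δ)) := by
  set h := x / n with hh
  have hn' : (0 : ℝ) < n := Nat.cast_pos.mpr hn
  have hh0 : 0 < h := div_pos hx hn'
  have ht0 (i : ℕ) : 0 ≤ (i : ℝ) * h := by positivity
  obtain ⟨z, hz0, hz⟩ := hex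
  set b := max x z
  have hψb : ψ b = 0 := hψ.psi_eq_zero_of_le hz0 hz (le_max_right x z)
  have hψbδ : ψ (b + δ) = 0 := hψ.psi_eq_zero_of_le hz0 hz (by linarith [le_max_right x z])
  set C : ℕ → Set Ω := fun i =>
    {ω | U ω ∈ Ioc (ψ ((i + 1 : ℕ) * h)) (ψ (i * h)) ∧ ψ (x - i * h + δ) < V ω}
  set D : Set Ω := {ω | U ω ∈ Ioc (ψ b) (ψ x) ∧ ψ δ < V ω}
  have hcover : {ω | psiInv ψ (U ω) + psiInv ψ (V ω) ≤ x}
      ≤ᵐ[ν] ((⋃ i ∈ Finset.range n, C i) ∪ D : Set Ω) := by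
    filter_upwards [hC.ae_mem_Ioc hψ ⟨z, hz0, hz⟩ hU hV] with ω ⟨hUω, hVω⟩ hS
    have hS : psiInv ψ (U ω) + psiInv ψ (V ω) ≤ x := hS
    have hUψ {c : ℝ} : 0 ≤ c → c ≤ psiInv ψ (U ω) → U ω ≤ ψ c :=
      hψ.le_psi_of_le_psiInv ⟨z, hz0, hz⟩ (Ioc_subset_Icc_self hUω)
    have hVψ {c : ℝ} : 0 ≤ c → psiInv ψ (V ω) < c → ψ c < V ω :=
      hψ.psi_lt_of_psiInv_lt ⟨z, hz0, hz⟩ hVω.1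
    rcases lt_or_ge (psiInv ψ (U ω)) x with hlt | hge
    · set i := ⌊psiInv ψ (U ω) / h⌋₊
      have hi : (i : ℝ) * h ≤ psiInv ψ (U ω) :=
        (le_div_iff₀ hh0).mp (Nat.floor_le (div_nonneg psiInv_nonneg hh0.le))
      have hi' : psiInv ψ (U ω) < ((i + 1 : ℕ) : ℝ) * h := by
        push_cast
        exact (div_lt_iff₀ hh0).mp (Nat.lt_floor_add_one _)
      have hin : i < n := (Nat.floor_lt (div_nonneg psiInv_nonneg hh0.le)).mpr
        ((div_lt_iff₀ hh0).mpr (by rwa [hh, mul_div_cancel₀ x hn'.ne']))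
      refine Or.inl (mem_biUnion (Finset.mem_range.mpr hin) ⟨⟨?_, hUψ (ht0 i) hi⟩, ?_⟩)
      · exact hψ.psi_lt_of_psiInv_lt ⟨z, hz0, hz⟩ hUω.1 (ht0 (i + 1)) hi'
      · exact hVψ (by linarith [(ht0 i).trans hi]) (by linarith)
    · refine Or.inr ⟨⟨hψb ▸ hUω.1, hUψ hx.le hge⟩, hVψ hδ.le ?_⟩
      linarith
  have hmassC {i : ℕ} (hi : i ∈ Finset.range n) :
      ν.real (C i) = ψ (i * h) - ψ ((i + 1 : ℕ) * h) - (ψ (x + δ) - ψ (x + x / n + δ)) := by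
    have hix : (i : ℝ) * h ≤ x := natCast_mul_div_le hx.le (Finset.mem_range.mp hi).le
    have hsum₁ : (i : ℝ) * h + (x - i * h + δ) = x + δ := by ring
    have hsum₂ : ((i + 1 : ℕ) : ℝ) * h + (x - i * h + δ) = x + x / n + δ := by push_cast; ring
    rw [hC.measureReal_strip hψ ⟨z, hz0, hz⟩ hU hV (ht0 i) (by gcongr; omega) (by linarith),
      hsum₁, hsum₂]
  have hmassD : ν.real D = ψ x - ψ (x + δ) := by
    rw [hC.measureReal_strip hψ ⟨z, hz0, hz⟩ hU hV hx.le (le_max_left x z) hδ.le, hψb, hψbδ]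
    ring
  calc ν.real {ω | psiInv ψ (U ω) + psiInv ψ (V ω) ≤ x}
      ≤ ν.real ((⋃ i ∈ Finset.range n, C i) ∪ D) :=
        ENNReal.toReal_mono (measure_ne_top _ _) (measure_mono_ae hcover)
    _ ≤ ∑ i ∈ Finset.range n, ν.real (C i) + ν.real D :=
        (measureReal_union_le _ _).trans (by gcongr; exact measureReal_biUnion_finset_le _ _)
    _ = 1 - ψ x - n * (ψ (x + δ) - ψ (x + x / n + δ)) + (ψ x - ψ (x + δ)) := by
        rw [Finset.sum_congr rfl fun i hi => hmassC hi,
          Finset.sum_range_sub_uniform_partition ψ x _ hn.ne', hψ.map_zero, hmassD]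
    _ = 1 - ψ (x + δ) + n * (ψ (x + x / n + δ) - ψ (x + δ)) := by ring

theorem measureReal_psiInv_add_le (hC : IsArchCopulaLaw ν ψ U V) (hψ : IsArchGen ψ)
    (hex : ∃ z, 0 ≤ z ∧ ψ z = 0) (hU : Measurable U) (hV : Measurable V) (hx : 0 < x)
    (hdiff : DifferentiableAt ℝ ψ x) :
    ν.real {ω | psiInv ψ (U ω) + psiInv ψ (V ω) ≤ x} = 1 - ψ x + x * deriv ψ x := by
  have hderiv := hdiff.hasDerivAt
  have hright {y : ℝ} (hy : 0 < y) : Tendsto (fun δ => ψ (y + δ)) (𝓝[>] 0) (𝓝 (ψ y)) := by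
    have hshift : Tendsto (fun δ => y + δ) (𝓝[>] 0) (𝓝 y) := by
      simpa using ((continuous_const_add y).tendsto 0).mono_left nhdsWithin_le_nhds
    exact (hψ.continuousOn.continuousAt (Ici_mem_nhds hy)).tendsto.comp hshift
  have hupper {n : ℕ} (hn : 0 < n) : ν.real {ω | psiInv ψ (U ω) + psiInv ψ (V ω) ≤ x}
      ≤ 1 - ψ x + n * (ψ (x + x / n) - ψ x) := by
    have hxn : 0 < x + x / n := by positivity
    refine ge_of_tendsto (((tendsto_const_nhds.sub (hright hx)).add
      (((hright hxn).sub (hright hx)).const_mul (n : ℝ)))) ?_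
    exact eventually_nhdsWithin_of_forall fun δ hδ =>
      hC.measureReal_psiInv_add_le_le hψ hex hU hV hx hn hδ
  have hlower {n : ℕ} (hn : 0 < n) := hC.le_measureReal_psiInv_add_le hψ hex hU hV hx hn
  refine le_antisymm ?_ ?_
  · exact ge_of_tendsto (tendsto_const_nhds.add (hderiv.tendsto_nat_mul_sub x))
      (eventually_atTop.mpr ⟨1, fun n hn => hupper hn⟩)
  · have := le_of_tendsto (tendsto_const_nhds.sub (hderiv.tendsto_nat_mul_sub (-x)))
      (eventually_atTop.mpr ⟨1, fun n hn => hlower hn⟩)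
    linarith

theorem identDistrib_psiInv_add {Ω' : Type*} [MeasurableSpace Ω'] {μ : Measure Ω'}
    [IsProbabilityMeasure μ] (hC : IsArchCopulaLaw ν ψ U V) (hψ : IsArchGen ψ)
    (hU : Measurable U) (hV : Measurable V) {R : Ω' → ℝ} (hRm : Measurable R)
    (hR0 : ∀ ω, 0 ≤ R ω)
    (hR : ∀ x, 0 ≤ x → μ.real {ω | R ω ≤ x} = 1 - ψ x + x * derivWithin ψ (Ici x) x) :
    IdentDistrib (fun ω => psiInv ψ (U ω) + psiInv ψ (V ω)) R ν μ := by
  have hex := hC.exists_psi_eq_zero hψ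
  have hS : Measurable fun ω => psiInv ψ (U ω) + psiInv ψ (V ω) :=
    ((hψ.measurable_psiInv hex).comp hU).add ((hψ.measurable_psiInv hex).comp hV)
  have := Measure.isProbabilityMeasure_map (μ := ν) hS.aemeasurable
  have := Measure.isProbabilityMeasure_map (μ := μ) hRm.aemeasurable
  refine ⟨hS.aemeasurable, hRm.aemeasurable, Measure.eq_of_cdf_ae_eq _ _ ?_⟩
  filter_upwards [compl_mem_ae_iff.mpr (measure_singleton (0 : ℝ)),
    (hψ.antitoneOn.mono Ioi_subset_Ici_self).ae_differentiableAt isOpen_Ioi] with x hx0 hdiff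
  rw [cdf_eq_real, cdf_eq_real, map_measureReal_apply hS measurableSet_Iic,
    map_measureReal_apply hRm measurableSet_Iic]
  rcases (show x ≠ 0 from hx0).lt_or_gt with hneg | hpos
  · have hS0 : (fun ω => psiInv ψ (U ω) + psiInv ψ (V ω)) ⁻¹' Iic x = ∅ :=
      eq_empty_of_forall_notMem fun ω hω =>
        (add_nonneg psiInv_nonneg psiInv_nonneg).not_gt (lt_of_le_of_lt hω hneg)
    have hR0' : R ⁻¹' Iic x = ∅ :=
      eq_empty_of_forall_notMem fun ω hω => (hR0 ω).not_gt (lt_of_le_of_lt hω hneg)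
    simp [hS0, hR0']
  · have hRx := hR x hpos.le
    rw [(hdiff hpos).derivWithin (uniqueDiffWithinAt_Ici x)] at hRx
    exact (hC.measureReal_psiInv_add_le hψ hex hU hV hpos (hdiff hpos)).trans hRx.symm

end IsArchCopulaLaw

theorem stmt16_general {Ω Ω' : Type*} [MeasurableSpace Ω] [MeasurableSpace Ω']
    (μ : Measure Ω) (ν : Measure Ω') [IsProbabilityMeasure μ] [IsProbabilityMeasure ν]
    (ψ : ℝ → ℝ) (hψ : IsArchGen ψ)
    (R : Ω → ℝ) (hRm : Measurable R) (hR0 : ∀ ω, 0 ≤ R ω)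
    (hR : ∀ x : ℝ, 0 ≤ x →
      (μ {ω | R ω ≤ x}).toReal = 1 - ψ x + x * derivWithin ψ (Set.Ici x) x)
    (U V : Ω' → ℝ) (hUm : Measurable U) (hVm : Measurable V)
    (hUV : ∀ u ∈ Set.Icc (0:ℝ) 1, ∀ v ∈ Set.Icc (0:ℝ) 1,
      (ν {ω | U ω ≤ u ∧ V ω ≤ v}).toReal = ψ (psiInv ψ u + psiInv ψ v)) :
    4 * (∫ ω, ψ (psiInv ψ (U ω) + psiInv ψ (V ω)) ∂ν) - 1
      = 4 * (∫ ω, ψ (R ω) ∂μ) - 1 := by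
  have hC : IsArchCopulaLaw ν ψ U V := hUV
  rw [(hC.identDistrib_psiInv_add hψ hUm hVm hRm hR0 hR).integral_comp_of_continuousOn
    hψ.continuousOn measurableSet_Ici (ae_of_all _ fun ω => add_nonneg psiInv_nonneg psiInv_nonneg)]

/-- Kendall's tau of a bivariate Archimedean copula `C` with (2-monotone) generator `ψ`:
if `R` has the radial distribution `F_R(x) = 1 - ψ(x) + x ψ₊'(x)` associated with `ψ`
and `(U, V) ~ C`, then `τ(C) = 4 E[C(U,V)] - 1 = 4 E[ψ(R)] - 1`. -/
theorem stmt16 {Ω Ω' : Type*} [MeasurableSpace Ω] [MeasurableSpace Ω']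
    (μ : Measure Ω) (ν : Measure Ω') [IsProbabilityMeasure μ] [IsProbabilityMeasure ν]
    (ψ : ℝ → ℝ) (hψ : IsArchGen ψ) (hconv : ConvexOn ℝ (Set.Ici 0) ψ)
    (R : Ω → ℝ) (hRm : Measurable R) (hR0 : ∀ ω, 0 ≤ R ω)
    (hR : ∀ x : ℝ, 0 ≤ x →
      (μ {ω | R ω ≤ x}).toReal = 1 - ψ x + x * derivWithin ψ (Set.Ici x) x)
    (U V : Ω' → ℝ) (hUm : Measurable U) (hVm : Measurable V)
    (hUV : ∀ u ∈ Set.Icc (0:ℝ) 1, ∀ v ∈ Set.Icc (0:ℝ) 1,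
      (ν {ω | U ω ≤ u ∧ V ω ≤ v}).toReal = ψ (psiInv ψ u + psiInv ψ v)) :
    4 * (∫ ω, ψ (psiInv ψ (U ω) + psiInv ψ (V ω)) ∂ν) - 1
      = 4 * (∫ ω, ψ (R ω) ∂μ) - 1 :=
  stmt16_general μ ν ψ hψ R hRm hR0 hR U V hUm hVm hUV
end
end
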